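/- arXiv:1805.08758 — 6 statements merged into one kernel-verified Lean document; each statement's English description precedes it below -/
import Mathlib

section
/- In a flow network, every firm's flow-based choice function satisfies the irrelevance of rejected contracts (IRC) condition: for any sets of contracts Y, Z with C^f(Y) ⊆ Z ⊆ Y, we have C^f(Z) = C^f(Y). -/
open Finset

/-- A trading network: firms `F`, contracts `X`, seller/buyer maps, and choice functions. -/
structure TradingNetwork (F X : Type) where
  sell : X → F
  buy  : X → F
  C : F → Finset X → Finset X

namespace TradingNetwork

variable {F X : Type} [DecidableEq F] [DecidableEq X] [Fintype X]

/-- The contracts in `Y` involving firm `f`. -/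
def own (N : TradingNetwork F X) (f : F) (Y : Finset X) : Finset X :=
  Y.filter fun x => N.sell x = f ∨ N.buy x = f

/-- Upstream contracts of `f` (contracts where `f` is the buyer). -/
def XB (N : TradingNetwork F X) (f : F) : Finset X := univ.filter fun x => N.buy x = f

/-- Downstream contracts of `f` (contracts where `f` is the seller). -/
def XS (N : TradingNetwork F X) (f : F) : Finset X := univ.filter fun x => N.sell x = f

/-- A terminal agent: a terminal seller (no upstream contracts) or terminal buyer. -/
def Terminal (N : TradingNetwork F X) (f : F) : Prop := N.XB f = ∅ ∨ N.XS f = ∅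

/-- `S` consists of the `k` most preferred elements of `Y` according to the
rank function `r` (lower rank = more preferred). -/
def IsTop (r : X → ℕ) (k : ℕ) (Y S : Finset X) : Prop :=
  S ⊆ Y ∧ S.card = k ∧ ∀ x ∈ S, ∀ y ∈ Y, y ∉ S → r x < r y

/-- The choice functions of `N` are flow-based with respect to the preference ranks
`rkB` (over upstream contracts) and `rkS` (over downstream contracts): terminal agents
accept everything, and a non-terminal agent offered upstream contracts `Y ∩ XB f` and
downstream contracts `Y ∩ XS f` chooses its `k = min (|Y ∩ XB f|) (|Y ∩ XS f|)` most
preferred contracts on each side. -/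
structure FlowBased (N : TradingNetwork F X) (rkB rkS : F → X → ℕ) : Prop where
  injB : ∀ f, ∀ x ∈ N.XB f, ∀ y ∈ N.XB f, rkB f x = rkB f y → x = y
  injS : ∀ f, ∀ x ∈ N.XS f, ∀ y ∈ N.XS f, rkS f x = rkS f y → x = y
  C_own : ∀ f Y, N.C f Y ⊆ N.own f Y
  terminal_accepts : ∀ f, N.Terminal f → ∀ Y, N.C f Y = N.own f Y
  top_choice : ∀ f, ¬ N.Terminal f → ∀ Y : Finset X,
      IsTop (rkB f) (min (Y ∩ N.XB f).card (Y ∩ N.XS f).card)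
        (Y ∩ N.XB f) (N.C f Y ∩ N.XB f)
    ∧ IsTop (rkS f) (min (Y ∩ N.XB f).card (Y ∩ N.XS f).card)
        (Y ∩ N.XS f) (N.C f Y ∩ N.XS f)

/-- A flow network: a trading network with no self-loop contracts, flow-based choice
functions, and exactly two terminal agents. -/
instance (N : TradingNetwork F X) : DecidablePred N.Terminal := fun f =>
  decidable_of_iff (N.XB f = ∅ ∨ N.XS f = ∅) Iff.rfl

def IsFlowNetwork [Fintype F] (N : TradingNetwork F X) (rkB rkS : F → X → ℕ) : Prop :=
  (∀ x, N.sell x ≠ N.buy x) ∧ N.FlowBased rkB rkS ∧ Fintype.card {f // N.Terminal f} = 2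

/-- An outcome is acceptable (individually rational for every firm). -/
def Acceptable (N : TradingNetwork F X) (A : Finset X) : Prop :=
  ∀ f, N.C f (N.own f A) = N.own f A

/-- `B` is `(A,f)`-acceptable: `f` chooses all its contracts in `B` when offered `B` alongside `A`. -/
def AccAlongside (N : TradingNetwork F X) (A B : Finset X) (f : F) : Prop :=
  N.own f B ⊆ N.C f (N.own f A ∪ N.own f B)

/-- Firm `f` is involved in the contract set `B`. -/
def Involved (N : TradingNetwork F X) (B : Finset X) (f : F) : Prop := (N.own f B).Nonempty

/-- `Z` is a blocking set for the outcome `A`. -/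
def Blocks (N : TradingNetwork F X) (A Z : Finset X) : Prop :=
  Z.Nonempty ∧ Disjoint Z A ∧ ∀ f, N.Involved Z f → N.AccAlongside A Z f

/-- A stable outcome: acceptable and admitting no blocking set. -/
def Stable (N : TradingNetwork F X) (A : Finset X) : Prop :=
  N.Acceptable A ∧ ¬ ∃ Z, N.Blocks A Z

/-- A path: consecutive contracts, with all involved firms distinct. -/
def IsPath (N : TradingNetwork F X) (l : List X) : Prop :=
  ∃ h : l ≠ [], l.Chain' (fun x y => N.buy x = N.sell y) ∧
    (N.sell (l.head h) :: l.map N.buy).Nodup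

/-- A cycle: consecutive contracts with distinct sellers, returning to the start. -/
def IsCycle (N : TradingNetwork F X) (l : List X) : Prop :=
  ∃ h : l ≠ [], l.Chain' (fun x y => N.buy x = N.sell y) ∧
    (l.map N.sell).Nodup ∧ N.buy (l.getLast h) = N.sell (l.head h)

/-- `l` is a blocking path or blocking cycle for the outcome `A`. -/
def BlockingPathOrCycle (N : TradingNetwork F X) (A : Finset X) (l : List X) : Prop :=
  (N.IsPath l ∨ N.IsCycle l) ∧ Disjoint l.toFinset A ∧
    ∀ f, N.Involved l.toFinset f → N.AccAlongside A l.toFinset f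

/-- A path-or-cycle-stable outcome. -/
def PathOrCycleStable (N : TradingNetwork F X) (A : Finset X) : Prop :=
  N.Acceptable A ∧ ¬ ∃ l : List X, N.BlockingPathOrCycle A l

/-- Chosen upstream contracts of `f` when offered upstream contracts `Y` and downstream `Z`. -/
def CB (N : TradingNetwork F X) (f : F) (Y Z : Finset X) : Finset X :=
  N.C f ((Y ∩ N.XB f) ∪ (Z ∩ N.XS f)) ∩ N.XB f

/-- Chosen downstream contracts of `f` when offered downstream `Z` and upstream `Y`. -/
def CS (N : TradingNetwork F X) (f : F) (Z Y : Finset X) : Finset X :=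
  N.C f ((Y ∩ N.XB f) ∪ (Z ∩ N.XS f)) ∩ N.XS f

/-- Rejected upstream contracts. -/
def RB (N : TradingNetwork F X) (f : F) (Y Z : Finset X) : Finset X :=
  (Y ∩ N.XB f) \ N.CB f Y Z

/-- Rejected downstream contracts. -/
def RS (N : TradingNetwork F X) (f : F) (Z Y : Finset X) : Finset X :=
  (Z ∩ N.XS f) \ N.CS f Z Y

/-- Full substitutability (same-side substitutability and cross-side complementarity)
of the choice function of firm `f`. -/
def FullySubstitutableAt (N : TradingNetwork F X) (f : F) : Prop :=
  ∀ Y' Y Z' Z : Finset X, Y' ⊆ Y → Z' ⊆ Z →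
    N.RB f Y' Z ⊆ N.RB f Y Z ∧ N.RS f Z' Y ⊆ N.RS f Z Y ∧
    N.RB f Y Z ⊆ N.RB f Y Z' ∧ N.RS f Z Y ⊆ N.RS f Z Y'

/-- Full substitutability of all choice functions. -/
def FullySubstitutable (N : TradingNetwork F X) : Prop :=
  ∀ f, N.FullySubstitutableAt f

/-- The irrelevance of rejected contracts condition for the choice function of firm `f`. -/
def IRCAt (N : TradingNetwork F X) (f : F) : Prop :=
  ∀ Y Z : Finset X, N.C f Y ⊆ Z → Z ⊆ Y → N.C f Z = N.C f Y

/-- The irrelevance of rejected contracts condition. -/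
def IRC (N : TradingNetwork F X) : Prop := ∀ f, N.IRCAt f

end TradingNetwork

namespace TradingNetwork

theorem IsTop.eq {X : Type} {r : X → ℕ} {k : ℕ} {Y S T : Finset X}
    (hS : IsTop r k Y S) (hT : IsTop r k Y T) : S = T := by
  obtain ⟨hSY, hSk, hS_lt⟩ := hS
  obtain ⟨hTY, hTk, hT_lt⟩ := hT
  refine eq_of_subset_of_card_le (fun x hxS => ?_) (by rw [hSk, hTk])
  by_contra hxT
  -- `S` and `T` have the same size, so `S ⊄ T` forces some `t ∈ T \ S`; then `r x < r t < r x`.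
  obtain ⟨t, htT, htS⟩ : ∃ t ∈ T, t ∉ S := by
    by_contra! hTS
    exact hxT (eq_of_subset_of_card_le hTS (by rw [hSk, hTk]) ▸ hxS)
  exact absurd (hS_lt x hxS t (hTY htT) htS) (hT_lt t htT x (hSY hxS) hxT).asymm

theorem IsTop.mono {X : Type} {r : X → ℕ} {k : ℕ} {Y Z S : Finset X}
    (hS : IsTop r k Y S) (hSZ : S ⊆ Z) (hZY : Z ⊆ Y) : IsTop r k Z S :=
  ⟨hSZ, hS.2.1, fun x hx y hy => hS.2.2 x hx y (hZY hy)⟩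

theorem own_eq_of_own_subset {F X : Type} [DecidableEq F] {N : TradingNetwork F X} {f : F}
    {Y Z : Finset X} (hYZ : N.own f Y ⊆ Z) (hZY : Z ⊆ Y) :
    N.own f Z = N.own f Y :=
  (filter_subset_filter _ hZY).antisymm fun _ hx =>
    mem_filter.2 ⟨hYZ hx, (mem_filter.1 hx).2⟩

variable {F X : Type} [DecidableEq F] [DecidableEq X] [Fintype X]
  {N : TradingNetwork F X} {rkB rkS : F → X → ℕ}

theorem FlowBased.C_eq_inter_XB_union_inter_XS (hN : N.FlowBased rkB rkS) (f : F)
    (W : Finset X) :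
    N.C f W = (N.C f W ∩ N.XB f) ∪ (N.C f W ∩ N.XS f) := by
  rw [← inter_union_distrib_left, eq_comm, inter_eq_left]
  intro x hx
  have := (mem_filter.1 (hN.C_own f W hx)).2
  simp only [XB, XS, mem_union, mem_filter, mem_univ, true_and]
  tauto

theorem FlowBased.ircAt_of_terminal (hN : N.FlowBased rkB rkS) {f : F} (hf : N.Terminal f) :
    N.IRCAt f := by
  intro Y Z hYZ hZY
  rw [hN.terminal_accepts f hf] at hYZ ⊢
  rw [hN.terminal_accepts f hf, own_eq_of_own_subset hYZ hZY]

theorem FlowBased.ircAt_of_not_terminal (hN : N.FlowBased rkB rkS) {f : F}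
    (hf : ¬ N.Terminal f) : N.IRCAt f := by
  intro Y Z hYZ hZY
  obtain ⟨hYB, hYS⟩ := hN.top_choice f hf Y
  obtain ⟨hZB, hZS⟩ := hN.top_choice f hf Z
  have hB : N.C f Y ∩ N.XB f ⊆ Z ∩ N.XB f := inter_subset_inter_right hYZ
  have hS : N.C f Y ∩ N.XS f ⊆ Z ∩ N.XS f := inter_subset_inter_right hYZ
  have hZYB : Z ∩ N.XB f ⊆ Y ∩ N.XB f := inter_subset_inter_right hZY
  have hZYS : Z ∩ N.XS f ⊆ Y ∩ N.XS f := inter_subset_inter_right hZY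
  -- Both sides of `C f Y` already have size `k(Y)` inside `Z`, so `k(Z) = k(Y)`.
  have hk : min (Z ∩ N.XB f).card (Z ∩ N.XS f).card =
      min (Y ∩ N.XB f).card (Y ∩ N.XS f).card :=
    le_antisymm (min_le_min (card_le_card hZYB) (card_le_card hZYS))
      (le_min (hYB.2.1 ▸ card_le_card hB) (hYS.2.1 ▸ card_le_card hS))
  rw [hk] at hZB hZS
  rw [hN.C_eq_inter_XB_union_inter_XS f Z, hN.C_eq_inter_XB_union_inter_XS f Y,
    hZB.eq (hYB.mono hB hZYB), hZS.eq (hYS.mono hS hZYS)]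

theorem FlowBased.irc (hN : N.FlowBased rkB rkS) : N.IRC := fun f =>
  if hf : N.Terminal f then hN.ircAt_of_terminal hf else hN.ircAt_of_not_terminal hf

end TradingNetwork

open TradingNetwork in
/-- In a flow network, every firm's flow-based choice function satisfies
the irrelevance of rejected contracts condition. -/
theorem flowNetwork_IRC {F X : Type} [DecidableEq F] [DecidableEq X] [Fintype X] [Fintype F]
    (N : TradingNetwork F X) (rkB rkS : F → X → ℕ)
    (hN : N.IsFlowNetwork rkB rkS) :
    N.IRC :=
  hN.2.1.irc
end

section
/- Every flow-based choice function is fully substitutable: it satisfies same-side substitutability (for Y' ⊆ Y and Z' ⊆ Z: R_B^f(Y'|Z) ⊆ R_B^f(Y|Z) and R_S^f(Z'|Y) ⊆ R_S^f(Z|Y)) and cross-side complementarity (R_B^f(Y|Z) ⊆ R_B^f(Y|Z') and R_S^f(Z|Y) ⊆ R_S^f(Z|Y')). -/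
open Finset

/-!
Fix a non-terminal firm `f`, offered a set `W` of contracts. A loop (a contract that `f` both
buys and sells) is always chosen: rejecting it would force `k` below both `|W ∩ XB f|` and
`|W ∩ XS f|`. Offering a loop together with a one-sided contract (so `k = 1`) then shows that
`f` ranks every loop above every one-sided contract. Hence an upstream contract `x` is rejected
exactly when at least `|W ∩ XS f|` offered upstream contracts are ranked above it. Adding
upstream offers raises this count by at least the number of loops among them, which is all
they add to `|W ∩ XS f|`; withdrawing downstream offers lowers `|W ∩ XS f|` by at least the
number of loops among them, which is all they remove from the count. The downstream side is
the upstream side of the network with every contract reversed.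
-/

lemma Finset.card_inter_eq_card_inter_add_card_sdiff_inter {X : Type} [DecidableEq X]
    {W₁ W₂ : Finset X} (T : Finset X) (h : W₁ ⊆ W₂) :
    #(W₂ ∩ T) = #(W₁ ∩ T) + #((W₂ \ W₁) ∩ T) := by
  rw [← card_union_of_disjoint (disjoint_sdiff.mono inter_subset_left inter_subset_left),
    ← union_inter_distrib_right, union_sdiff_of_subset h]

namespace TradingNetwork

section IsTop

variable {X : Type} [DecidableEq X] {r : X → ℕ} {k : ℕ} {Y S : Finset X} {x y : X}

theorem IsTop.lt_card_of_notMem (h : IsTop r k Y S) (hx : x ∈ Y) (hxS : x ∉ S) : k < #Y := by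
  have hSY : S ⊆ Y.erase x := fun s hs => mem_erase.2 ⟨ne_of_mem_of_not_mem hs hxS, h.1 hs⟩
  have := card_le_card hSY
  rw [card_erase_of_mem hx, h.2.1] at this
  have := card_pos.2 ⟨x, hx⟩
  omega

theorem IsTop.notMem_iff (h : IsTop r k Y S) (hx : x ∈ Y) :
    x ∉ S ↔ k ≤ #(Y.filter fun y => r y < r x) := by
  obtain ⟨hSY, hcard, hbest⟩ := h
  constructor
  · intro hxS
    rw [← hcard]
    exact card_le_card fun s hs => mem_filter.2 ⟨hSY hs, hbest s hs x hx hxS⟩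
  · intro hk hxS
    have hsub : (Y.filter fun y => r y < r x) ⊆ S.erase x := by
      intro y hy
      obtain ⟨hyY, hyx⟩ := mem_filter.1 hy
      refine mem_erase.2 ⟨by rintro rfl; exact lt_irrefl _ hyx, ?_⟩
      by_contra hyS
      exact lt_asymm hyx (hbest x hxS y hyY hyS)
    have := (card_le_card hsub).trans_lt (card_erase_lt_of_mem hxS)
    omega

theorem IsTop.lt_of_mem_pair (h : IsTop r 1 {x, y} S) (hx : x ∈ S) (hxy : x ≠ y) :
    r x < r y := by
  refine h.2.2 x hx y (by simp) fun hy => ?_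
  have := card_le_card (insert_subset hx (singleton_subset_iff.2 hy))
  rw [h.2.1, card_pair hxy] at this
  omega

end IsTop

variable {F X : Type} [DecidableEq F] {N : TradingNetwork F X} {f : F}

def swap (N : TradingNetwork F X) : TradingNetwork F X := ⟨N.buy, N.sell, N.C⟩

theorem own_swap (Y : Finset X) : N.swap.own f Y = N.own f Y := by
  ext x
  simp only [own, swap, mem_filter, or_comm]

variable [DecidableEq X] [Fintype X] {rkB rkS : F → X → ℕ}
  {W₁ W₂ W Y' Y Z' Z : Finset X} {x : X}

theorem FlowBased.swap (hfb : N.FlowBased rkB rkS) : N.swap.FlowBased rkS rkB where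
  injB := hfb.injS
  injS := hfb.injB
  C_own f Y := by rw [own_swap]; exact hfb.C_own f Y
  terminal_accepts f hf Y := by rw [own_swap]; exact hfb.terminal_accepts f (Or.symm hf) Y
  top_choice f hf Y := by
    obtain ⟨hB, hS⟩ := hfb.top_choice f (fun h => hf (Or.symm h)) Y
    rw [min_comm] at hB hS
    exact ⟨hS, hB⟩

theorem RS_eq_RB_swap : N.RS f Z Y = N.swap.RB f Z Y := by
  simp only [RS, CS, RB, CB]
  rw [union_comm]
  rfl

theorem mem_RB_iff :
    x ∈ N.RB f Y Z ↔ x ∈ Y ∩ N.XB f ∧ x ∉ N.C f (Y ∩ N.XB f ∪ Z ∩ N.XS f) := by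
  simp only [RB, CB, mem_sdiff, mem_inter]
  tauto

namespace FlowBased

theorem RB_eq_empty_of_terminal (hfb : N.FlowBased rkB rkS) (hf : N.Terminal f) :
    N.RB f Y Z = ∅ := by
  refine eq_empty_of_forall_notMem fun x hx => ?_
  obtain ⟨hxYB, hxC⟩ := mem_RB_iff.1 hx
  rw [hfb.terminal_accepts f hf, own, mem_filter] at hxC
  exact hxC ⟨mem_union_left _ hxYB, Or.inr (mem_filter.1 (mem_inter.1 hxYB).2).2⟩

theorem mem_C_of_mem_XB_of_mem_XS (hfb : N.FlowBased rkB rkS) (hf : ¬ N.Terminal f) {l : X}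
    (hlW : l ∈ W) (hlB : l ∈ N.XB f) (hlS : l ∈ N.XS f) : l ∈ N.C f W := by
  by_contra hl
  obtain ⟨hB, hS⟩ := hfb.top_choice f hf W
  have h₁ := hB.lt_card_of_notMem (mem_inter.2 ⟨hlW, hlB⟩) fun h => hl (mem_inter.1 h).1
  have h₂ := hS.lt_card_of_notMem (mem_inter.2 ⟨hlW, hlS⟩) fun h => hl (mem_inter.1 h).1
  omega

theorem rkB_lt_of_mem_XS_of_notMem_XS (hfb : N.FlowBased rkB rkS) (hf : ¬ N.Terminal f)
    {l y : X} (hlB : l ∈ N.XB f) (hlS : l ∈ N.XS f) (hyB : y ∈ N.XB f) (hyS : y ∉ N.XS f) :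
    rkB f l < rkB f y := by
  have hly : l ≠ y := by rintro rfl; exact hyS hlS
  have hB : {l, y} ∩ N.XB f = {l, y} := inter_eq_left.2 (insert_subset hlB (by simpa using hyB))
  have hS : {l, y} ∩ N.XS f = {l} := by
    ext z
    simp only [mem_inter, mem_insert, mem_singleton]
    constructor
    · rintro ⟨rfl | rfl, hz⟩
      · rfl
      · exact absurd hz hyS
    · rintro rfl
      exact ⟨Or.inl rfl, hlS⟩
  have h := (hfb.top_choice f hf {l, y}).1
  rw [hB, hS, card_pair hly, card_singleton] at h
  exact h.lt_of_mem_pair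
    (mem_inter.2 ⟨hfb.mem_C_of_mem_XB_of_mem_XS hf (by simp) hlB hlS, hlB⟩) hly

theorem notMem_XS_of_mem_RB (hfb : N.FlowBased rkB rkS) (hf : ¬ N.Terminal f)
    (hx : x ∈ N.RB f Y Z) : x ∉ N.XS f := fun hxS => by
  obtain ⟨hxYB, hxC⟩ := mem_RB_iff.1 hx
  exact hxC (hfb.mem_C_of_mem_XB_of_mem_XS hf (mem_union_left _ hxYB) (mem_inter.1 hxYB).2 hxS)

theorem notMem_C_iff (hfb : N.FlowBased rkB rkS) (hf : ¬ N.Terminal f)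
    (hxW : x ∈ W) (hxB : x ∈ N.XB f) :
    x ∉ N.C f W ↔ #(W ∩ N.XS f) ≤ #(W ∩ (N.XB f).filter fun y => rkB f y < rkB f x) := by
  have hxU : x ∈ W ∩ N.XB f := mem_inter.2 ⟨hxW, hxB⟩
  have hlt : #((W ∩ N.XB f).filter fun y => rkB f y < rkB f x) < #(W ∩ N.XB f) :=
    card_lt_card (filter_ssubset.2 ⟨x, hxU, lt_irrefl _⟩)
  calc x ∉ N.C f W ↔ x ∉ N.C f W ∩ N.XB f := by simp [hxB]
    _ ↔ _ := (hfb.top_choice f hf W).1.notMem_iff hxU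
    _ ↔ _ := by rw [inter_filter]; omega

theorem notMem_C_of_subset (hfb : N.FlowBased rkB rkS) (hf : ¬ N.Terminal f)
    (hW : W₁ ⊆ W₂) (hnew : W₂ \ W₁ ⊆ N.XB f)
    (hxW : x ∈ W₁) (hxB : x ∈ N.XB f) (hxS : x ∉ N.XS f) (hxC : x ∉ N.C f W₁) :
    x ∉ N.C f W₂ := by
  have hloops :
      (W₂ \ W₁) ∩ N.XS f ⊆
        (W₂ \ W₁) ∩ (N.XB f).filter fun y => rkB f y < rkB f x := by
    intro y hy
    obtain ⟨hyD, hyS⟩ := mem_inter.1 hy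
    exact mem_inter.2 ⟨hyD, mem_filter.2
      ⟨hnew hyD, hfb.rkB_lt_of_mem_XS_of_notMem_XS hf (hnew hyD) hyS hxB hxS⟩⟩
  rw [hfb.notMem_C_iff hf hxW hxB] at hxC
  rw [hfb.notMem_C_iff hf (hW hxW) hxB,
    card_inter_eq_card_inter_add_card_sdiff_inter _ hW,
    card_inter_eq_card_inter_add_card_sdiff_inter _ hW]
  have := card_le_card hloops
  omega

theorem notMem_C_of_superset (hfb : N.FlowBased rkB rkS) (hf : ¬ N.Terminal f)
    (hW : W₁ ⊆ W₂) (hnew : W₂ \ W₁ ⊆ N.XS f)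
    (hxW : x ∈ W₁) (hxB : x ∈ N.XB f) (hxC : x ∉ N.C f W₂) :
    x ∉ N.C f W₁ := by
  have hloops :
      (W₂ \ W₁) ∩ (N.XB f).filter (fun y => rkB f y < rkB f x) ⊆ (W₂ \ W₁) ∩ N.XS f :=
    subset_inter inter_subset_left (inter_subset_left.trans hnew)
  rw [hfb.notMem_C_iff hf (hW hxW) hxB,
    card_inter_eq_card_inter_add_card_sdiff_inter _ hW,
    card_inter_eq_card_inter_add_card_sdiff_inter _ hW] at hxC
  rw [hfb.notMem_C_iff hf hxW hxB]
  have := card_le_card hloops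
  omega

theorem RB_mono_left (hfb : N.FlowBased rkB rkS) (hY : Y' ⊆ Y) :
    N.RB f Y' Z ⊆ N.RB f Y Z := by
  by_cases hf : N.Terminal f
  · simp [hfb.RB_eq_empty_of_terminal hf]
  intro x hx
  have hxS := hfb.notMem_XS_of_mem_RB hf hx
  obtain ⟨hxYB, hxC⟩ := mem_RB_iff.1 hx
  have hYB : Y' ∩ N.XB f ⊆ Y ∩ N.XB f := inter_subset_inter_right hY
  refine mem_RB_iff.2 ⟨hYB hxYB, hfb.notMem_C_of_subset hf (union_subset_union hYB subset_rfl)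
    ?_ (mem_union_left _ hxYB) (mem_inter.1 hxYB).2 hxS hxC⟩
  intro y hy
  simp only [mem_sdiff, mem_union, mem_inter] at hy
  tauto

theorem RB_anti_right (hfb : N.FlowBased rkB rkS) (hZ : Z' ⊆ Z) :
    N.RB f Y Z ⊆ N.RB f Y Z' := by
  by_cases hf : N.Terminal f
  · simp [hfb.RB_eq_empty_of_terminal hf]
  intro x hx
  obtain ⟨hxYB, hxC⟩ := mem_RB_iff.1 hx
  refine mem_RB_iff.2 ⟨hxYB, hfb.notMem_C_of_superset hf
    (union_subset_union subset_rfl (inter_subset_inter_right hZ))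
    ?_ (mem_union_left _ hxYB) (mem_inter.1 hxYB).2 hxC⟩
  intro y hy
  simp only [mem_sdiff, mem_union, mem_inter] at hy
  tauto

end FlowBased

end TradingNetwork

open TradingNetwork in
/-- Every flow-based choice function is fully substitutable:
same-side substitutability and cross-side complementarity hold for every firm. -/
theorem flowBased_fullySubstitutable {F X : Type} [DecidableEq F] [DecidableEq X] [Fintype X]
    (N : TradingNetwork F X) (rkB rkS : F → X → ℕ)
    (hfb : N.FlowBased rkB rkS) :
    N.FullySubstitutable := by
  intro f Y' Y Z' Z hY hZ
  simp only [RS_eq_RB_swap]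
  exact ⟨hfb.RB_mono_left hY, hfb.swap.RB_mono_left hZ,
    hfb.RB_anti_right hZ, hfb.swap.RB_anti_right hY⟩
end

section
/- In a flow network, an outcome is path-or-cycle-stable if and only if it is stable. -/
open Finset

/-!
Let `Z` block an acceptable outcome `A`. An acceptable outcome is balanced (as many upstream as
downstream contracts) at every non-terminal firm, so any set of contracts that is balanced at a
firm is accepted there alongside `A`. Grow a path inside `Z`: if the firm at one end rejects the
end contract on its own, flow-based choice forces `Z` to contain another contract of that firm
on the other side, which extends the path. A chain that revisits a firm contains a cycle, which
is balanced everywhere and hence blocks; a path whose end contracts are accepted on their own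
blocks as well, its interior firms being balanced. Since there are finitely many firms, one of
the two must occur.
-/

namespace TradingNetwork

open List

variable {F X : Type} {N : TradingNetwork F X} {rkB rkS : F → X → ℕ} {A L Z : Finset X} {f : F}
  {l : List X} {x z : X}

def firms (N : TradingNetwork F X) : List X → List F
  | [] => []
  | z :: t => N.sell z :: (z :: t).map N.buy

lemma firms_eq_cons (hne : l ≠ []) : N.firms l = N.sell (l.head hne) :: l.map N.buy := by
  cases l with
  | nil => contradiction
  | cons z t => rfl

lemma firms_eq_map_buy_cons {t : List X} (hch : (z :: t).IsChain fun x y => N.buy x = N.sell y)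
    (ht : t ≠ []) : N.firms t = (z :: t).map N.buy := by
  cases t with
  | nil => contradiction
  | cons w t => simp [firms, (isChain_cons_cons.1 hch).1]

lemma firms_eq_map_sell_append (hch : l.IsChain fun x y => N.buy x = N.sell y) (hne : l ≠ []) :
    N.firms l = l.map N.sell ++ [N.buy (l.getLast hne)] := by
  induction l with
  | nil => contradiction
  | cons z t ih =>
    rcases eq_or_ne t [] with rfl | ht
    · rfl
    · rw [getLast_cons ht, List.map_cons, cons_append, ← ih hch.tail ht,
        firms_eq_map_buy_cons hch ht]
      rfl

lemma firms_prefix {p t : List X} (h : p <+: t) (hp : p ≠ []) : N.firms p <+: N.firms t := by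
  obtain ⟨r, rfl⟩ := h
  cases p with
  | nil => contradiction
  | cons z p => exact ⟨r.map N.buy, by simp [firms]⟩

lemma IsPath.length_lt_card [Fintype F] (hp : N.IsPath l) : l.length < Fintype.card F := by
  obtain ⟨hne, -, hnd⟩ := hp
  simpa using hnd.length_le_card

lemma exists_isCycle_prefix {t : List X} (hch : (z :: t).IsChain fun x y => N.buy x = N.sell y)
    (hnd : (N.firms t).Nodup) (hz : N.sell z ∈ N.firms t) : ∃ c, N.IsCycle c ∧ c <+: z :: t := by
  have ht : t ≠ [] := by
    rintro rfl
    simp [firms] at hz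
  rw [firms_eq_map_buy_cons hch ht] at hz
  obtain ⟨x, hx, hxz⟩ := mem_map.1 hz
  obtain ⟨s, r, hsr⟩ := mem_iff_append.1 hx
  cases s with
  | nil =>
    obtain ⟨rfl, -⟩ := cons_eq_cons.1 hsr
    exact ⟨[z], ⟨cons_ne_nil _ _, isChain_singleton z, nodup_singleton _, hxz⟩, ⟨t, rfl⟩⟩
  | cons a s =>
    obtain ⟨rfl, rfl⟩ := cons_eq_cons.1 hsr
    have hpre : z :: (s ++ [x]) <+: z :: (s ++ x :: r) := ⟨r, by simp⟩
    have hsx : s ++ [x] ≠ [] := by simp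
    have hcycle : (N.firms (s ++ [x])).Nodup := (firms_prefix ⟨r, by simp⟩ hsx).sublist.nodup hnd
    rw [firms_eq_map_sell_append (hch.tail.prefix ⟨r, by simp⟩) hsx, getLast_append_singleton,
      hxz] at hcycle
    exact ⟨z :: (s ++ [x]), ⟨cons_ne_nil _ _, hch.prefix hpre,
      (perm_append_singleton _ _).nodup_iff.1 hcycle, by simpa using hxz⟩, hpre⟩

lemma isPath_or_exists_isCycle (hne : l ≠ []) (hch : l.IsChain fun x y => N.buy x = N.sell y) :
    N.IsPath l ∨ ∃ c, N.IsCycle c ∧ c ⊆ l := by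
  induction l with
  | nil => contradiction
  | cons z t ih =>
    rcases eq_or_ne t [] with rfl | ht
    · by_cases h : N.buy z = N.sell z
      · exact .inr ⟨[z], ⟨cons_ne_nil _ _, isChain_singleton z, nodup_singleton _, h⟩,
          Subset.refl _⟩
      · exact .inl ⟨cons_ne_nil _ _, isChain_singleton z, by simp [Ne.symm h]⟩
    rcases ih ht hch.tail with ⟨ht, -, hnd⟩ | ⟨c, hc, hct⟩
    · rw [← firms_eq_cons ht] at hnd
      by_cases hmem : N.sell z ∈ N.firms t
      · obtain ⟨c, hc, hpre⟩ := exists_isCycle_prefix hch hnd hmem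
        exact .inr ⟨c, hc, hpre.subset⟩
      · refine .inl ⟨cons_ne_nil _ _, hch, ?_⟩
        change (N.sell z :: (z :: t).map N.buy).Nodup
        rw [← firms_eq_map_buy_cons hch ht]
        exact nodup_cons.2 ⟨hmem, hnd⟩
    · exact .inr ⟨c, hc, fun y hy => mem_cons_of_mem _ (hct hy)⟩

lemma IsCycle.perm_map_buy_map_sell (hc : N.IsCycle l) : (l.map N.buy).Perm (l.map N.sell) := by
  obtain ⟨hne, hch, -, hclose⟩ := hc
  have h := (firms_eq_cons hne).symm.trans (firms_eq_map_sell_append hch hne)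
  rw [hclose] at h
  exact (perm_cons _).1 (by rw [h]; exact perm_append_singleton _ _)

lemma IsTop.mem_of_subset [DecidableEq X] {r : X → ℕ} {k : ℕ} {Y₁ Y₂ S₁ S₂ : Finset X}
    (h₁ : IsTop r k Y₁ S₁) (h₂ : IsTop r k Y₂ S₂) (hY : Y₂ ⊆ Y₁) (hx₁ : x ∈ S₁) (hx₂ : x ∈ Y₂) :
    x ∈ S₂ := by
  by_contra hx
  obtain ⟨hS₁, hcard₁, htop₁⟩ := h₁
  obtain ⟨hS₂, hcard₂, htop₂⟩ := h₂
  obtain ⟨w, hw, hwS₁⟩ := Finset.not_subset.1 fun h : insert x S₂ ⊆ S₁ => by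
    have := Finset.card_le_card h
    rw [Finset.card_insert_of_notMem hx] at this
    omega
  have hwS₂ : w ∈ S₂ := (Finset.mem_insert.1 hw).resolve_left fun h => hwS₁ (h ▸ hx₁)
  have := htop₁ x hx₁ w (hY (hS₂ hwS₂)) hwS₁
  have := htop₂ w hwS₂ x hx₂ hx
  omega

lemma IsTop.eq_of_card_le {r : X → ℕ} {k : ℕ} {Y S : Finset X} (h : IsTop r k Y S)
    (hk : Y.card ≤ k) : S = Y :=
  Finset.eq_of_subset_of_card_le h.1 (h.2.1 ▸ hk)

variable [DecidableEq F]

lemma mem_own {Y : Finset X} : x ∈ N.own f Y ↔ x ∈ Y ∧ (N.sell x = f ∨ N.buy x = f) :=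
  Finset.mem_filter

lemma own_mono {Y W : Finset X} (h : Y ⊆ W) : N.own f Y ⊆ N.own f W :=
  Finset.filter_subset_filter _ h

lemma own_own (Y : Finset X) : N.own f (N.own f Y) = N.own f Y := by
  ext; simp only [mem_own]; tauto

lemma involved_iff : N.Involved L f ↔ ∃ x ∈ L, N.sell x = f ∨ N.buy x = f := by
  simp [Involved, Finset.Nonempty, mem_own]

def reverse (N : TradingNetwork F X) : TradingNetwork F X where
  sell := N.buy
  buy := N.sell
  C := N.C

lemma own_reverse : N.reverse.own = N.own :=
  funext fun _ => funext fun _ => Finset.filter_congr fun _ _ => or_comm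

@[simp]
lemma mem_XB [Fintype X] : x ∈ N.XB f ↔ N.buy x = f := by simp [XB]

@[simp]
lemma mem_XS [Fintype X] : x ∈ N.XS f ↔ N.sell x = f := by simp [XS]

lemma terminal_reverse [Fintype X] : N.reverse.Terminal f ↔ N.Terminal f :=
  or_comm

lemma acceptable_reverse : N.reverse.Acceptable A ↔ N.Acceptable A := by
  simp only [Acceptable, own_reverse]
  rfl

variable [DecidableEq X]

lemma own_union (Y W : Finset X) : N.own f (Y ∪ W) = N.own f Y ∪ N.own f W :=
  Finset.filter_union _ _ _

lemma accAlongside_iff_subset_C_own_union :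
    N.AccAlongside A L f ↔ N.own f L ⊆ N.C f (N.own f (A ∪ L)) := by
  rw [AccAlongside, own_union]

lemma accAlongside_reverse : N.reverse.AccAlongside A L f ↔ N.AccAlongside A L f := by
  simp only [AccAlongside, own_reverse]
  rfl

lemma own_buy_toFinset (hb : (l.map N.buy).Nodup) (hx : x ∈ l)
    (hs : N.buy x ∉ l.map N.sell) : N.own (N.buy x) l.toFinset = N.own (N.buy x) {x} := by
  ext y
  simp only [mem_own, mem_toFinset, Finset.mem_singleton]
  constructor
  · rintro ⟨hy, h | h⟩
    · exact absurd (h ▸ mem_map_of_mem hy) hs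
    · exact ⟨inj_on_of_nodup_map hb hy hx h, Or.inr h⟩
  · rintro ⟨rfl, h⟩
    exact ⟨hx, h⟩

lemma own_sell_toFinset (hs : (l.map N.sell).Nodup) (hx : x ∈ l)
    (hb : N.sell x ∉ l.map N.buy) : N.own (N.sell x) l.toFinset = N.own (N.sell x) {x} := by
  rw [← own_reverse]
  exact own_buy_toFinset (N := N.reverse) hs hx hb

lemma BlockingPathOrCycle.blocks (hl : N.BlockingPathOrCycle A l) :
    N.Blocks A l.toFinset := by
  obtain ⟨⟨hne, -⟩ | ⟨hne, -⟩, hd, hacc⟩ := hl <;>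
    exact ⟨(toFinset_nonempty_iff _).2 hne, hd, hacc⟩

variable [Fintype X]

lemma own_inter_XB (Y : Finset X) : N.own f Y ∩ N.XB f = Y ∩ N.XB f := by
  ext; simp only [Finset.mem_inter, mem_own, mem_XB]; tauto

lemma own_inter_XS (Y : Finset X) : N.own f Y ∩ N.XS f = Y ∩ N.XS f := by
  ext; simp only [Finset.mem_inter, mem_own, mem_XS]; tauto

lemma FlowBased.reverse (hFB : N.FlowBased rkB rkS) : N.reverse.FlowBased rkS rkB where
  injB := hFB.injS
  injS := hFB.injB
  C_own f Y := by
    rw [own_reverse]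
    exact hFB.C_own f Y
  terminal_accepts f hf Y := by
    rw [own_reverse]
    exact hFB.terminal_accepts f (terminal_reverse.1 hf) Y
  top_choice f hf Y := by
    rw [min_comm]
    exact (hFB.top_choice f (mt terminal_reverse.2 hf) Y).symm

lemma card_toFinset_inter_XB (hb : (l.map N.buy).Nodup)
    (hf : f ∈ l.map N.buy) : (l.toFinset ∩ N.XB f).card = 1 := by
  obtain ⟨x, hx, rfl⟩ := mem_map.1 hf
  refine Finset.card_eq_one.2 ⟨x, Finset.ext fun y => ?_⟩
  simp only [Finset.mem_inter, mem_toFinset, mem_XB, Finset.mem_singleton]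
  exact ⟨fun ⟨hy, h⟩ => inj_on_of_nodup_map hb hy hx h, by rintro rfl; exact ⟨hx, rfl⟩⟩

lemma card_toFinset_inter_XS (hs : (l.map N.sell).Nodup)
    (hf : f ∈ l.map N.sell) : (l.toFinset ∩ N.XS f).card = 1 :=
  card_toFinset_inter_XB (N := N.reverse) hs hf

lemma own_eq_inter_XB_union_inter_XS (Y : Finset X) :
    N.own f Y = Y ∩ N.XB f ∪ Y ∩ N.XS f := by
  ext; simp only [mem_own, Finset.mem_union, Finset.mem_inter, mem_XB, mem_XS]; tauto

namespace FlowBased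

variable (hFB : N.FlowBased rkB rkS)
include hFB

lemma accAlongside_of_terminal (hf : N.Terminal f) : N.AccAlongside A L f := by
  rw [accAlongside_iff_subset_C_own_union, hFB.terminal_accepts f hf, own_own]
  exact own_mono Finset.subset_union_right

lemma card_inter_XB_eq_of_acceptable (hA : N.Acceptable A) (hf : ¬ N.Terminal f) :
    (A ∩ N.XB f).card = (A ∩ N.XS f).card := by
  obtain ⟨⟨-, hB, -⟩, ⟨-, hS, -⟩⟩ := hFB.top_choice f hf (N.own f A)
  rw [hA f, own_inter_XB, own_inter_XS] at hB hS
  omega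

lemma C_own_eq_of_card_eq {Y : Finset X} (hf : ¬ N.Terminal f)
    (h : (Y ∩ N.XB f).card = (Y ∩ N.XS f).card) : N.C f (N.own f Y) = N.own f Y := by
  obtain ⟨hB, hS⟩ := hFB.top_choice f hf (N.own f Y)
  rw [own_inter_XB, own_inter_XS] at hB hS
  refine (hFB.C_own f _).trans (own_own Y).le |>.antisymm fun x hx => ?_
  rw [own_eq_inter_XB_union_inter_XS, ← hB.eq_of_card_le (by omega),
    ← hS.eq_of_card_le (by omega)] at hx
  rcases Finset.mem_union.1 hx with h | h <;> exact (Finset.mem_inter.1 h).1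

lemma accAlongside_of_card_eq (hA : N.Acceptable A) (hd : Disjoint L A)
    (h : (L ∩ N.XB f).card = (L ∩ N.XS f).card) : N.AccAlongside A L f := by
  by_cases hf : N.Terminal f
  · exact hFB.accAlongside_of_terminal hf
  have card_union (S : Finset X) : ((A ∪ L) ∩ S).card = (A ∩ S).card + (L ∩ S).card := by
    rw [Finset.union_inter_distrib_right]
    exact Finset.card_union_of_disjoint
      (hd.symm.mono Finset.inter_subset_left Finset.inter_subset_left)
  rw [accAlongside_iff_subset_C_own_union, hFB.C_own_eq_of_card_eq hf (by
    rw [card_union, card_union, h, hFB.card_inter_XB_eq_of_acceptable hA hf])]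
  exact own_mono Finset.subset_union_right

lemma accAlongside_toFinset (hA : N.Acceptable A) (hd : Disjoint l.toFinset A)
    (hb : (l.map N.buy).Nodup) (hs : (l.map N.sell).Nodup) (hfb : f ∈ l.map N.buy)
    (hfs : f ∈ l.map N.sell) : N.AccAlongside A l.toFinset f :=
  hFB.accAlongside_of_card_eq hA hd
    (by rw [card_toFinset_inter_XB hb hfb, card_toFinset_inter_XS hs hfs])

lemma mem_C_of_inter_XB_subset (hf : ¬ N.Terminal f) {Y₁ Y₂ : Finset X}
    (hB : Y₂ ∩ N.XB f ⊆ Y₁ ∩ N.XB f) (hS : Y₁ ∩ N.XS f = Y₂ ∩ N.XS f)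
    (hle : (Y₂ ∩ N.XS f).card ≤ (Y₂ ∩ N.XB f).card)
    (hx₁ : x ∈ N.C f Y₁) (hx₂ : x ∈ Y₂ ∩ N.XB f) : x ∈ N.C f Y₂ := by
  have h₁ := (hFB.top_choice f hf Y₁).1
  have h₂ := (hFB.top_choice f hf Y₂).1
  have := Finset.card_le_card hB
  rw [hS, min_eq_right (by omega)] at h₁
  rw [min_eq_right hle] at h₂
  exact (Finset.mem_inter.1 <| h₁.mem_of_subset h₂ hB
    (Finset.mem_inter.2 ⟨hx₁, (Finset.mem_inter.1 hx₂).2⟩) hx₂).1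

/-- If `Z` sold nothing on behalf of `buy z`, the downstream offer would be that of `A`
both with `Z` and with `{z}` alone, and shrinking `Z` to `{z}` could only help `z`. -/
lemma exists_sell_eq_buy_of_not_accAlongside (hA : N.Acceptable A) (hz : z ∈ Z)
    (hacc : N.AccAlongside A Z (N.buy z)) (hrej : ¬ N.AccAlongside A {z} (N.buy z)) :
    ∃ z' ∈ Z, N.sell z' = N.buy z := by
  by_contra! hno
  have hf : ¬ N.Terminal (N.buy z) := fun ht => hrej (hFB.accAlongside_of_terminal ht)
  have hZS : Z ∩ N.XS (N.buy z) = ∅ :=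
    Finset.eq_empty_of_forall_notMem fun y hy => hno y (Finset.mem_inter.1 hy).1
      (mem_XS.1 (Finset.mem_inter.1 hy).2)
  have hzS : ({z} : Finset X) ∩ N.XS (N.buy z) = ∅ :=
    Finset.eq_empty_of_forall_notMem fun y hy => by
      simp only [Finset.mem_inter, Finset.mem_singleton, mem_XS] at hy
      exact hno y (hy.1 ▸ hz) hy.2
  have hS : (A ∪ Z) ∩ N.XS (N.buy z) = (A ∪ {z}) ∩ N.XS (N.buy z) := by
    rw [Finset.union_inter_distrib_right, Finset.union_inter_distrib_right, hZS, hzS]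
  rw [accAlongside_iff_subset_C_own_union] at hacc hrej
  refine hrej ((Finset.singleton_subset_iff.2 ?_).trans' (Finset.filter_subset _ _))
  refine hFB.mem_C_of_inter_XB_subset hf (Y₁ := N.own (N.buy z) (A ∪ Z)) ?_ ?_ ?_
    (hacc (mem_own.2 ⟨hz, Or.inr rfl⟩)) (by simp [mem_own])
  · rw [own_inter_XB, own_inter_XB]
    exact Finset.inter_subset_inter
      (Finset.union_subset_union_right (Finset.singleton_subset_iff.2 hz)) le_rfl
  · rw [own_inter_XS, own_inter_XS, hS]
  · rw [own_inter_XS, own_inter_XB, ← hS, Finset.union_inter_distrib_right, hZS,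
      Finset.union_empty, ← hFB.card_inter_XB_eq_of_acceptable hA hf]
    exact Finset.card_le_card (Finset.inter_subset_inter Finset.subset_union_left le_rfl)

lemma exists_buy_eq_sell_of_not_accAlongside (hA : N.Acceptable A) (hz : z ∈ Z)
    (hacc : N.AccAlongside A Z (N.sell z)) (hrej : ¬ N.AccAlongside A {z} (N.sell z)) :
    ∃ z' ∈ Z, N.buy z' = N.sell z :=
  hFB.reverse.exists_sell_eq_buy_of_not_accAlongside (acceptable_reverse.2 hA) hz
    (accAlongside_reverse.2 hacc) (mt accAlongside_reverse.1 hrej)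

end FlowBased

lemma IsCycle.blockingPathOrCycle (hc : N.IsCycle l) (hFB : N.FlowBased rkB rkS)
    (hA : N.Acceptable A) (hd : Disjoint l.toFinset A) : N.BlockingPathOrCycle A l := by
  refine ⟨.inr hc, hd, fun f hf => ?_⟩
  have hperm := hc.perm_map_buy_map_sell
  obtain ⟨-, -, hs, -⟩ := hc
  have hfs : f ∈ l.map N.sell := by
    obtain ⟨x, hx, h | h⟩ := involved_iff.1 hf
    · exact h ▸ mem_map_of_mem (mem_toFinset.1 hx)
    · exact hperm.subset (h ▸ mem_map_of_mem (mem_toFinset.1 hx))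
  exact hFB.accAlongside_toFinset hA hd (hperm.nodup_iff.2 hs) hs (hperm.mem_iff.2 hfs) hfs

lemma IsPath.blockingPathOrCycle (hp : N.IsPath l) (hFB : N.FlowBased rkB rkS)
    (hA : N.Acceptable A) (hd : Disjoint l.toFinset A)
    (hhead : ∀ x ∈ l.head?, N.AccAlongside A {x} (N.sell x))
    (hlast : ∀ x ∈ l.getLast?, N.AccAlongside A {x} (N.buy x)) :
    N.BlockingPathOrCycle A l := by
  refine ⟨.inl hp, hd, fun f hf => ?_⟩
  obtain ⟨hne, hch, hnd⟩ := hp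
  have hfirms := (firms_eq_cons hne).symm.trans (firms_eq_map_sell_append hch hne)
  have hb : (l.map N.buy).Nodup := hnd.of_cons
  have hs : (l.map N.sell).Nodup := (nodup_append.1 (hfirms ▸ hnd)).1
  by_cases hfb : f ∈ l.map N.buy <;> by_cases hfs : f ∈ l.map N.sell
  · exact hFB.accAlongside_toFinset hA hd hb hs hfb hfs
  · obtain rfl : f = N.buy (l.getLast hne) := by
      have := mem_cons_of_mem (N.sell (l.head hne)) hfb
      rw [hfirms] at this
      simpa [hfs] using this
    rw [AccAlongside, own_buy_toFinset hb (getLast_mem hne) hfs]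
    exact hlast _ (getLast_mem_getLast? hne)
  · obtain rfl : f = N.sell (l.head hne) := by
      have := mem_append_left [N.buy (l.getLast hne)] hfs
      rw [← hfirms] at this
      simpa [hfb] using this
    rw [AccAlongside, own_sell_toFinset hs (head_mem hne) hfb]
    exact hhead _ (head_mem_head? hne)
  · obtain ⟨x, hx, h | h⟩ := involved_iff.1 hf
    · exact absurd (h ▸ mem_map_of_mem (mem_toFinset.1 hx)) hfs
    · exact absurd (h ▸ mem_map_of_mem (mem_toFinset.1 hx)) hfb

namespace FlowBased

variable (hFB : N.FlowBased rkB rkS)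
include hFB

lemma exists_longer_chain (hA : N.Acceptable A) (hZ : N.Blocks A Z) (hp : N.IsPath l)
    (hlZ : ∀ x ∈ l, x ∈ Z) (hl : ¬ N.BlockingPathOrCycle A l) :
    ∃ l', l' ≠ [] ∧ l'.IsChain (fun x y => N.buy x = N.sell y) ∧ (∀ x ∈ l', x ∈ Z) ∧
      l.length < l'.length := by
  obtain ⟨-, hd, hacc⟩ := hZ
  have hdl : Disjoint l.toFinset A := hd.mono_left fun x hx => hlZ x (mem_toFinset.1 hx)
  obtain ⟨-, hch, -⟩ := id hp
  by_cases hlast : ∀ x ∈ l.getLast?, N.AccAlongside A {x} (N.buy x)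
  · by_cases hhead : ∀ x ∈ l.head?, N.AccAlongside A {x} (N.sell x)
    · exact absurd (hp.blockingPathOrCycle hFB hA hdl hhead hlast) hl
    obtain ⟨x, hx, hrej⟩ := not_forall₂.1 hhead
    have hxZ := hlZ x (mem_of_mem_head? hx)
    obtain ⟨z, hz, hzx⟩ := hFB.exists_buy_eq_sell_of_not_accAlongside hA hxZ
      (hacc _ (involved_iff.2 ⟨x, hxZ, .inl rfl⟩)) hrej
    refine ⟨z :: l, cons_ne_nil _ _, isChain_cons.2 ⟨fun y hy => ?_, hch⟩,
      forall_mem_cons.2 ⟨hz, hlZ⟩, by simp⟩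
    rwa [Option.mem_unique hy hx]
  · obtain ⟨x, hx, hrej⟩ := not_forall₂.1 hlast
    have hxZ := hlZ x (mem_of_mem_getLast? hx)
    obtain ⟨z, hz, hzx⟩ := hFB.exists_sell_eq_buy_of_not_accAlongside hA hxZ
      (hacc _ (involved_iff.2 ⟨x, hxZ, .inr rfl⟩)) hrej
    refine ⟨l ++ [z], by simp, isChain_append.2 ⟨hch, isChain_singleton z, ?_⟩, ?_, by simp⟩
    · rintro y hy w ⟨⟩
      rw [Option.mem_unique hy hx, hzx]
    · simpa [or_imp, forall_and] using ⟨hlZ, hz⟩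

lemma exists_blockingPathOrCycle [Fintype F] (hA : N.Acceptable A) (hZ : N.Blocks A Z) :
    ∃ l, N.BlockingPathOrCycle A l := by
  by_contra! hno
  obtain ⟨⟨z, hz⟩, hd, -⟩ := id hZ
  have chain_isPath (l : List X) (hne : l ≠ []) (hch : l.IsChain fun x y => N.buy x = N.sell y)
      (hlZ : ∀ x ∈ l, x ∈ Z) : N.IsPath l := by
    refine (isPath_or_exists_isCycle hne hch).resolve_right fun ⟨c, hc, hcl⟩ => hno c ?_
    exact hc.blockingPathOrCycle hFB hA
      (hd.mono_left fun x hx => hlZ x (hcl (mem_toFinset.1 hx)))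
  have long_path (n : ℕ) : ∃ l, N.IsPath l ∧ (∀ x ∈ l, x ∈ Z) ∧ n ≤ l.length := by
    induction n with
    | zero =>
      have hzZ : ∀ x ∈ [z], x ∈ Z := by simpa using hz
      exact ⟨[z], chain_isPath [z] (cons_ne_nil _ _) (isChain_singleton z) hzZ, hzZ,
        Nat.zero_le _⟩
    | succ n ih =>
      obtain ⟨l, hp, hlZ, hn⟩ := ih
      obtain ⟨l', hne, hch, hl'Z, hlt⟩ := hFB.exists_longer_chain hA hZ hp hlZ (hno l)
      exact ⟨l', chain_isPath l' hne hch hl'Z, hl'Z, by omega⟩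
  obtain ⟨l, hp, -, hlen⟩ := long_path (Fintype.card F)
  exact hp.length_lt_card.not_ge hlen

end FlowBased

end TradingNetwork

open TradingNetwork in
/-- In a flow network, an outcome is path-or-cycle-stable
if and only if it is stable. -/
theorem pathOrCycleStable_iff_stable {F X : Type} [DecidableEq F] [DecidableEq X] [Fintype X]
    [Fintype F] (N : TradingNetwork F X) (rkB rkS : F → X → ℕ)
    (hN : N.IsFlowNetwork rkB rkS) (A : Finset X) :
    N.PathOrCycleStable A ↔ N.Stable A := by
  obtain ⟨-, hFB, -⟩ := hN
  constructor
  · rintro ⟨hA, hno⟩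
    exact ⟨hA, fun ⟨Z, hZ⟩ => hno (hFB.exists_blockingPathOrCycle hA hZ)⟩
  · rintro ⟨hA, hno⟩
    exact ⟨hA, fun ⟨l, hl⟩ => hno ⟨_, hl.blocks⟩⟩
end

section
/- In the gadget network built from a directed graph D = (V,E), if the vertices of D can be partitioned into two acyclic sets Q and R, then the outcome A consisting of, for each v ∈ Q, the contracts {s s_v, s_v b_v, b_v b'_v, b'_v t_v, t_v t} and, for each v ∈ R, the contracts {s s_v, s_v a_v, a_v a'_v, a'_v t_v, t_v t} admits no blocking path and no blocking cycle. -/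
/-!
Every contract of a blocking path or cycle `l` lies on the a-route inside `Q`
(`s_v a_v`, `a_v a'_v`, `a'_u a_w` with `u, v, w ∈ Q`) or on the b-route inside `Qᶜ`
(`b_v b'_v`, `b'_v t_v`, `b'_u b_w` with `u, v, w ∉ Q`): any other contract outside `A(Q)` is
offered to a firm that has a single contract on the opposite side and prefers a contract of `A(Q)`
on this side, so the firm rejects it. Consecutive contracts of `l` cannot pass from one route to
the other, so all of `l` lies on one route.

A flow-based firm accepts an upstream contract only together with a downstream one, and conversely.
The buyers on the a-route in `Q` sell nothing in `A(Q)` and the sellers on the b-route in `Qᶜ`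
buy nothing in `A(Q)`; so a path on the a-route cannot end and a path on the b-route cannot start.
A cycle on either route walks along arcs of `D[Q]` or of `D[Qᶜ]` and closes up, so it yields a
directed cycle there.
-/

open Finset

/-! ### The gadget network built from a directed graph -/

/-- The induced subgraph on the vertex set `U` contains a directed cycle. -/
def HasCycleIn {V : Type} [DecidableEq V] (adj : V → V → Bool) (U : Finset V) : Prop :=
  ∃ l : List V, ∃ h : l ≠ [], l.Nodup ∧ (∀ v ∈ l, v ∈ U) ∧
    l.Chain' (fun u v => adj u v = true) ∧ adj (l.getLast h) (l.head h) = true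

/-- Firms of the gadget network: the two terminal firms `s = Sum.inl false` and
`t = Sum.inl true`, and for each vertex `v` the six firms
`s_v = (v,0)`, `a_v = (v,1)`, `a'_v = (v,2)`, `b_v = (v,3)`, `b'_v = (v,4)`, `t_v = (v,5)`. -/
abbrev GFirm (V : Type) : Type := Bool ⊕ (V × Fin 6)

/-- Contracts of the gadget network: for each vertex `v` the eight contracts
`s s_v = (v,0)`, `s_v a_v = (v,1)`, `s_v b_v = (v,2)`, `a_v a'_v = (v,3)`, `b_v b'_v = (v,4)`,
`a'_v t_v = (v,5)`, `b'_v t_v = (v,6)`, `t_v t = (v,7)`; and for each arc `uv` of the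
digraph the two contracts `a'_u a_v` (tagged `false`) and `b'_u b_v` (tagged `true`). -/
abbrev GContract (V : Type) (adj : V → V → Bool) : Type :=
  (V × Fin 8) ⊕ (({p : V × V // adj p.1 p.2 = true}) × Bool)

/-- Seller of each gadget contract. -/
def gSell {V : Type} (adj : V → V → Bool) : GContract V adj → GFirm V
  | Sum.inl (v, i) =>
      ![Sum.inl false, Sum.inr (v, 0), Sum.inr (v, 0), Sum.inr (v, 1), Sum.inr (v, 3),
        Sum.inr (v, 2), Sum.inr (v, 4), Sum.inr (v, 5)] i
  | Sum.inr (⟨(u, _), _⟩, false) => Sum.inr (u, 2)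
  | Sum.inr (⟨(u, _), _⟩, true) => Sum.inr (u, 4)

/-- Buyer of each gadget contract. -/
def gBuy {V : Type} (adj : V → V → Bool) : GContract V adj → GFirm V
  | Sum.inl (v, i) =>
      ![Sum.inr (v, 0), Sum.inr (v, 1), Sum.inr (v, 3), Sum.inr (v, 2), Sum.inr (v, 4),
        Sum.inr (v, 5), Sum.inr (v, 5), Sum.inl true] i
  | Sum.inr (⟨(_, v), _⟩, false) => Sum.inr (v, 1)
  | Sum.inr (⟨(_, v), _⟩, true) => Sum.inr (v, 3)

/-- The gadget trading network built from the digraph `adj`, with choice functions `C`. -/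
def gadgetNet {V : Type} (adj : V → V → Bool)
    (C : GFirm V → Finset (GContract V adj) → Finset (GContract V adj)) :
    TradingNetwork (GFirm V) (GContract V adj) :=
  ⟨gSell adj, gBuy adj, C⟩

/-- The preference restrictions of the reduction: each `s_v` prefers `s_v a_v` to `s_v b_v`;
each `t_v` prefers `b'_v t_v` to `a'_v t_v`; and every firm prefers its gadget (non-`Z`)
contracts to its arc (`Z`) contracts, on both sides. -/
structure GadgetPrefs {V : Type} [DecidableEq V] [Fintype V] (adj : V → V → Bool)
    (C : GFirm V → Finset (GContract V adj) → Finset (GContract V adj))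
    (rkB rkS : GFirm V → GContract V adj → ℕ) : Prop where
  sv_pref : ∀ v : V, rkS (Sum.inr (v, 0)) (Sum.inl (v, 1)) < rkS (Sum.inr (v, 0)) (Sum.inl (v, 2))
  tv_pref : ∀ v : V, rkB (Sum.inr (v, 5)) (Sum.inl (v, 6)) < rkB (Sum.inr (v, 5)) (Sum.inl (v, 5))
  nonZ_first_B : ∀ f : GFirm V, ∀ x ∈ (gadgetNet adj C).XB f, ∀ y ∈ (gadgetNet adj C).XB f,
    x.isLeft → y.isRight → rkB f x < rkB f y
  nonZ_first_S : ∀ f : GFirm V, ∀ x ∈ (gadgetNet adj C).XS f, ∀ y ∈ (gadgetNet adj C).XS f,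
    x.isLeft → y.isRight → rkS f x < rkS f y

/-- Whether a gadget contract belongs to the outcome `A(Q)` of the reduction. -/
def gOutcomeMem {V : Type} [DecidableEq V] (Q : Finset V) {adj : V → V → Bool} :
    GContract V adj → Bool
  | Sum.inl (v, i) =>
      if v ∈ Q then i = 0 ∨ i = 2 ∨ i = 4 ∨ i = 6 ∨ i = 7
      else i = 0 ∨ i = 1 ∨ i = 3 ∨ i = 5 ∨ i = 7
  | Sum.inr _ => false

/-- The outcome `A(Q)` of the reduction: for `v ∈ Q` the contracts
`{s s_v, s_v b_v, b_v b'_v, b'_v t_v, t_v t}`, and for `v ∉ Q` the contracts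
`{s s_v, s_v a_v, a_v a'_v, a'_v t_v, t_v t}`. -/
def gOutcome {V : Type} [DecidableEq V] [Fintype V] (adj : V → V → Bool) (Q : Finset V) :
    Finset (GContract V adj) :=
  Finset.univ.filter fun x => gOutcomeMem Q x = true

namespace List

theorem IsChain.forall_or_forall {α : Type*} {R : α → α → Prop} {P Q : α → Prop}
    {l : List α} (hl : l.IsChain R) (hPQ : ∀ x ∈ l, P x ∨ Q x)
    (hPQ_rel : ∀ x y, R x y → P x → ¬ Q y) (hQP_rel : ∀ x y, R x y → Q x → ¬ P y) :
    (∀ x ∈ l, P x) ∨ (∀ x ∈ l, Q x) := by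
  rcases l with _ | ⟨a, l⟩
  · simp
  have hl := IsChain.iff_mem.mp hl
  rcases hPQ a mem_cons_self with ha | ha
  · exact .inl <| hl.induction P _
      (fun x y ⟨_, hy, hxy⟩ hx => (hPQ y hy).resolve_right (hPQ_rel x y hxy hx)) fun _ => ha
  · exact .inr <| hl.induction Q _
      (fun x y ⟨_, hy, hxy⟩ hx => (hPQ y hy).resolve_left (hQP_rel x y hxy hx)) fun _ => ha

theorem IsChain.map_eq_dropLast {α β : Type*} {f g : α → β} :
    ∀ {a : α} {l : List α}, (a :: l).IsChain (fun x y => g x = f y) →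
      (a :: l).map f = (f a :: (a :: l).map g).dropLast
  | _, [], _ => rfl
  | a, b :: l, h => by
    rw [isChain_cons_cons] at h
    rw [map_cons, h.2.map_eq_dropLast]
    simp only [map_cons, dropLast_cons_cons, h.1]

end List

namespace TradingNetwork

section PathsAndCycles

variable {F X : Type} {N : TradingNetwork F X} {l : List X}

theorem IsPath.buy_ne_sell_head (hp : N.IsPath l) (hl : l ≠ []) {y : X} (hy : y ∈ l) :
    N.buy y ≠ N.sell (l.head hl) := by
  obtain ⟨_, -, hnd⟩ := hp
  exact fun h => (List.nodup_cons.mp hnd).1 (h ▸ List.mem_map_of_mem hy)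

theorem IsPath.sell_ne_buy_getLast (hp : N.IsPath l) (hl : l ≠ []) {y : X} (hy : y ∈ l) :
    N.sell y ≠ N.buy (l.getLast hl) := by
  rcases l with _ | ⟨a, l⟩
  · exact absurd rfl hl
  obtain ⟨_, hc, hnd⟩ := hp
  -- the sellers along the path are the firms of the path but its last one
  set L := N.sell a :: (a :: l).map N.buy
  have hsell : (a :: l).map N.sell = L.dropLast := List.IsChain.map_eq_dropLast hc
  have hlast : N.buy ((a :: l).getLast hl) = L.getLast (by simp [L]) := by
    rw [List.getLast_cons (l := (a :: l).map N.buy) (by simp), List.getLast_map]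
  have hL : L.Nodup := hnd
  rw [← List.dropLast_append_getLast (l := L) (by simp [L])] at hL
  intro h
  refine List.disjoint_of_nodup_append hL (hsell ▸ List.mem_map_of_mem hy) ?_
  rw [h, hlast]
  exact List.mem_singleton_self _

theorem IsCycle.exists_sell_eq_buy (hc : N.IsCycle l) {x : X} (hx : x ∈ l) :
    ∃ y ∈ l, N.buy x = N.sell y := by
  obtain ⟨hl, hchain, -, hwrap⟩ := hc
  obtain ⟨i, hi, rfl⟩ := List.mem_iff_getElem.mp hx
  by_cases hi' : i + 1 < l.length
  · exact ⟨l[i + 1], List.getElem_mem _, List.IsChain.getElem hchain i hi'⟩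
  · refine ⟨l.head hl, List.head_mem _, ?_⟩
    rw [List.getLast_eq_getElem] at hwrap
    obtain rfl : i = l.length - 1 := by omega
    exact hwrap

end PathsAndCycles

section Firms

variable {F X : Type} [DecidableEq F] [Fintype X] {N : TradingNetwork F X} {f : F} {x₀ : X}

theorem card_XB_le_one (h : ∀ x, N.buy x = f → x = x₀) : (N.XB f).card ≤ 1 :=
  card_le_one.mpr fun a ha b hb => (h a (mem_filter.mp ha).2).trans (h b (mem_filter.mp hb).2).symm

theorem card_XS_le_one (h : ∀ x, N.sell x = f → x = x₀) : (N.XS f).card ≤ 1 :=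
  card_le_one.mpr fun a ha b hb => (h a (mem_filter.mp ha).2).trans (h b (mem_filter.mp hb).2).symm

theorem not_terminal_of_buy_of_sell {x y : X} (hx : N.buy x = f) (hy : N.sell y = f) :
    ¬ N.Terminal f := by
  rintro (h | h)
  · exact eq_empty_iff_forall_notMem.mp h x (mem_filter.mpr ⟨mem_univ x, hx⟩)
  · exact eq_empty_iff_forall_notMem.mp h y (mem_filter.mpr ⟨mem_univ y, hy⟩)

end Firms

section FlowBased

variable {F X : Type} {x y : X}

theorem IsTop.pos_of_mem {r : X → ℕ} {k : ℕ} {Y S : Finset X} (h : IsTop r k Y S)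
    (hx : x ∈ S) : 0 < k :=
  h.2.1 ▸ card_pos.mpr ⟨x, hx⟩

theorem IsTop.le_of_card_le_one {r : X → ℕ} {k : ℕ} {Y S : Finset X} (h : IsTop r k Y S)
    (hk : k ≤ 1) (hx : x ∈ S) (hy : y ∈ Y) : r x ≤ r y := by
  by_cases hyS : y ∈ S
  · rw [card_le_one.mp (h.2.1 ▸ hk) x hx y hyS]
  · exact (h.2.2 x hx y hy hyS).le

variable [DecidableEq F] [DecidableEq X] {N : TradingNetwork F X} {A B : Finset X} {f : F}

theorem mem_C_of_accAlongside (hacc : ∀ f, N.Involved B f → N.AccAlongside A B f)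
    (hx : x ∈ B) (hf : N.sell x = f ∨ N.buy x = f) : x ∈ N.C f (N.own f A ∪ N.own f B) :=
  have hxf : x ∈ N.own f B := mem_filter.mpr ⟨hx, hf⟩
  hacc f ⟨x, hxf⟩ hxf

variable [Fintype X] {rkB rkS : F → X → ℕ}

theorem FlowBased.exists_sell_eq (hFB : N.FlowBased rkB rkS) (hf : ¬ N.Terminal f)
    (hacc : ∀ f, N.Involved B f → N.AccAlongside A B f) (hx : x ∈ B) (hbx : N.buy x = f) :
    ∃ y ∈ A ∪ B, N.sell y = f := by
  have hk := (hFB.top_choice f hf _).1.pos_of_mem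
    (mem_inter.mpr ⟨mem_C_of_accAlongside hacc hx (.inr hbx), by simp [XB, hbx]⟩)
  obtain ⟨y, hy⟩ := card_pos.mp (hk.trans_le (min_le_right _ _))
  simp only [own, XS, mem_inter, mem_union, mem_filter, mem_univ, true_and] at hy
  exact ⟨y, mem_union.mpr (hy.1.imp And.left And.left), hy.2⟩

theorem FlowBased.exists_buy_eq (hFB : N.FlowBased rkB rkS) (hf : ¬ N.Terminal f)
    (hacc : ∀ f, N.Involved B f → N.AccAlongside A B f) (hx : x ∈ B) (hsx : N.sell x = f) :
    ∃ y ∈ A ∪ B, N.buy y = f := by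
  have hk := (hFB.top_choice f hf _).2.pos_of_mem
    (mem_inter.mpr ⟨mem_C_of_accAlongside hacc hx (.inl hsx), by simp [XS, hsx]⟩)
  obtain ⟨y, hy⟩ := card_pos.mp (hk.trans_le (min_le_left _ _))
  simp only [own, XB, mem_inter, mem_union, mem_filter, mem_univ, true_and] at hy
  exact ⟨y, mem_union.mpr (hy.1.imp And.left And.left), hy.2⟩

theorem FlowBased.rkB_le_of_card_XS_le_one (hFB : N.FlowBased rkB rkS) (hf : ¬ N.Terminal f)
    (hXS : (N.XS f).card ≤ 1) (hacc : ∀ f, N.Involved B f → N.AccAlongside A B f)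
    (hx : x ∈ B) (hbx : N.buy x = f) (hy : y ∈ A) (hby : N.buy y = f) :
    rkB f x ≤ rkB f y :=
  (hFB.top_choice f hf _).1.le_of_card_le_one
    ((min_le_right _ _).trans ((card_le_card inter_subset_right).trans hXS))
    (mem_inter.mpr ⟨mem_C_of_accAlongside hacc hx (.inr hbx), by simp [XB, hbx]⟩)
    (by simp [own, XB, hy, hby])

theorem FlowBased.rkS_le_of_card_XB_le_one (hFB : N.FlowBased rkB rkS) (hf : ¬ N.Terminal f)
    (hXB : (N.XB f).card ≤ 1) (hacc : ∀ f, N.Involved B f → N.AccAlongside A B f)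
    (hx : x ∈ B) (hsx : N.sell x = f) (hy : y ∈ A) (hsy : N.sell y = f) :
    rkS f x ≤ rkS f y :=
  (hFB.top_choice f hf _).2.le_of_card_le_one
    ((min_le_left _ _).trans ((card_le_card inter_subset_right).trans hXB))
    (mem_inter.mpr ⟨mem_C_of_accAlongside hacc hx (.inl hsx), by simp [XS, hsx]⟩)
    (by simp [own, XS, hy, hsy])

end FlowBased

end TradingNetwork

theorem hasCycleIn_of_forall_exists_adj {V : Type} [DecidableEq V] {adj : V → V → Bool}
    {U S : Finset V} (hS : S.Nonempty) (hSU : S ⊆ U)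
    (hsucc : ∀ u ∈ S, ∃ w ∈ S, adj u w = true) : HasCycleIn adj U := by
  choose! g hgS hg using hsucc
  obtain ⟨x₀, hx₀⟩ := hS
  have hiter : ∀ n, g^[n] x₀ ∈ S := fun n => by
    induction n with
    | zero => exact hx₀
    | succ n ih => rw [Function.iterate_succ_apply']; exact hgS _ ih
  -- by pigeonhole the orbit of `x₀` reaches a periodic point `y`; the orbit of `y` is the cycle
  obtain ⟨m, hm, n, hn, hmn, heq⟩ := exists_ne_map_eq_of_card_lt_of_maps_to
    (s := range (S.card + 1)) (by simp) (fun n _ => hiter n)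
  wlog hlt : m < n generalizing m n
  · exact this n hn m hm hmn.symm heq.symm (by omega)
  set y := g^[m] x₀
  have hyS : ∀ k, g^[k] y ∈ S := fun k => by rw [← Function.iterate_add_apply]; exact hiter _
  have hper : Function.IsPeriodicPt g (n - m) y := by
    rw [Function.IsPeriodicPt, Function.IsFixedPt, ← Function.iterate_add_apply,
      Nat.sub_add_cancel hlt.le, heq]
  obtain ⟨q, hq⟩ := Nat.exists_eq_succ_of_ne_zero (hper.minimalPeriod_pos (by omega)).ne'
  refine ⟨List.iterate g y (q + 1), List.iterate_eq_nil.not.mpr q.succ_ne_zero, ?_, ?_, ?_, ?_⟩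
  · rw [← List.range_map_iterate]
    refine List.nodup_range.map_on fun i hi j hj hij => ?_
    exact Function.iterate_injOn_Iio_minimalPeriod (by simp_all) (by simp_all) hij
  · intro v hv
    obtain ⟨k, -, rfl⟩ := List.mem_iterate.mp hv
    exact hSU (hyS k)
  · show List.IsChain _ _
    rw [← List.range_map_iterate, List.isChain_map, List.isChain_range_succ]
    intro k _
    rw [Function.iterate_succ_apply']
    exact hg _ (hyS k)
  · have hback : g (g^[q] y) = y := by
      rw [← Function.iterate_succ_apply' g q y, ← hq]; exact Function.iterate_minimalPeriod
    rw [List.getLast_eq_getElem, List.getElem_iterate]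
    simpa [hback] using hg _ (hyS q)

section Gadget

open TradingNetwork

variable {V : Type} {adj : V → V → Bool} {x y : GContract V adj} {v : V}

theorem eq_of_gBuy_eq_s (h : gBuy adj x = Sum.inr (v, 0)) : x = Sum.inl (v, 0) := by
  rcases x with ⟨w, i⟩ | ⟨⟨⟨u, w⟩, ha⟩, _ | _⟩
  all_goals try fin_cases i
  all_goals simp_all [gBuy]

theorem eq_of_gBuy_eq_a' (h : gBuy adj x = Sum.inr (v, 2)) : x = Sum.inl (v, 3) := by
  rcases x with ⟨w, i⟩ | ⟨⟨⟨u, w⟩, ha⟩, _ | _⟩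
  all_goals try fin_cases i
  all_goals simp_all [gBuy]

theorem eq_of_gBuy_eq_b' (h : gBuy adj x = Sum.inr (v, 4)) : x = Sum.inl (v, 4) := by
  rcases x with ⟨w, i⟩ | ⟨⟨⟨u, w⟩, ha⟩, _ | _⟩
  all_goals try fin_cases i
  all_goals simp_all [gBuy]

theorem eq_of_gSell_eq_a (h : gSell adj x = Sum.inr (v, 1)) : x = Sum.inl (v, 3) := by
  rcases x with ⟨w, i⟩ | ⟨⟨⟨u, w⟩, ha⟩, _ | _⟩
  all_goals try fin_cases i
  all_goals simp_all [gSell]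

theorem gSell_eq_a'_cases (h : gSell adj x = Sum.inr (v, 2)) :
    x = Sum.inl (v, 5) ∨ ∃ w ha, x = Sum.inr (⟨(v, w), ha⟩, false) := by
  rcases x with ⟨w, i⟩ | ⟨⟨⟨u, w⟩, ha⟩, _ | _⟩
  all_goals try fin_cases i
  all_goals simp_all [gSell]
  grind

theorem eq_of_gSell_eq_b (h : gSell adj x = Sum.inr (v, 3)) : x = Sum.inl (v, 4) := by
  rcases x with ⟨w, i⟩ | ⟨⟨⟨u, w⟩, ha⟩, _ | _⟩
  all_goals try fin_cases i
  all_goals simp_all [gSell]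

theorem gSell_eq_b'_cases (h : gSell adj x = Sum.inr (v, 4)) :
    x = Sum.inl (v, 6) ∨ ∃ w ha, x = Sum.inr (⟨(v, w), ha⟩, true) := by
  rcases x with ⟨w, i⟩ | ⟨⟨⟨u, w⟩, ha⟩, _ | _⟩
  all_goals try fin_cases i
  all_goals simp_all [gSell]
  grind

theorem eq_of_gSell_eq_t (h : gSell adj x = Sum.inr (v, 5)) : x = Sum.inl (v, 7) := by
  rcases x with ⟨w, i⟩ | ⟨⟨⟨u, w⟩, ha⟩, _ | _⟩
  all_goals try fin_cases i
  all_goals simp_all [gSell]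

-- `s_v a_v`, `a_v a'_v` for `v ∈ Q` and the arcs `a'_u a_w` for `u, w ∈ Q`
def ARouteIn (Q : Finset V) : GContract V adj → Prop
  | Sum.inl (v, i) => v ∈ Q ∧ (i = 1 ∨ i = 3)
  | Sum.inr (⟨(u, w), _⟩, b) => b = false ∧ u ∈ Q ∧ w ∈ Q

-- `b_v b'_v`, `b'_v t_v` for `v ∈ R` and the arcs `b'_u b_w` for `u, w ∈ R`
def BRouteIn (R : Finset V) : GContract V adj → Prop
  | Sum.inl (v, i) => v ∈ R ∧ (i = 4 ∨ i = 6)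
  | Sum.inr (⟨(u, w), _⟩, b) => b = true ∧ u ∈ R ∧ w ∈ R

variable {Q R : Finset V}

theorem ARouteIn.buy_ne_sell (hx : ARouteIn Q x) (hy : BRouteIn R y) :
    gBuy adj x ≠ gSell adj y := by
  rcases x with ⟨v, i⟩ | ⟨⟨⟨u, w⟩, ha⟩, _ | _⟩ <;>
    rcases y with ⟨v', j⟩ | ⟨⟨⟨u', w'⟩, ha'⟩, _ | _⟩
  all_goals try fin_cases i
  all_goals try fin_cases j
  all_goals simp_all [ARouteIn, BRouteIn, gBuy, gSell]

theorem BRouteIn.buy_ne_sell (hx : BRouteIn R x) (hy : ARouteIn Q y) :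
    gBuy adj x ≠ gSell adj y := by
  rcases x with ⟨v, i⟩ | ⟨⟨⟨u, w⟩, ha⟩, _ | _⟩ <;>
    rcases y with ⟨v', j⟩ | ⟨⟨⟨u', w'⟩, ha'⟩, _ | _⟩
  all_goals try fin_cases i
  all_goals try fin_cases j
  all_goals simp_all [ARouteIn, BRouteIn, gBuy, gSell]

variable [DecidableEq V] [Fintype V]

theorem hasCycleIn_of_aRouteIn {l : List (GContract V adj)} (hl : l ≠ [])
    (hQ : ∀ x ∈ l, ARouteIn Q x) (hsucc : ∀ x ∈ l, ∃ y ∈ l, gBuy adj x = gSell adj y) :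
    HasCycleIn adj Q := by
  classical
  set S := univ.filter fun v => (Sum.inl (v, 3) : GContract V adj) ∈ l
  have mem_S_of_buy : ∀ x ∈ l, ∀ w, gBuy adj x = Sum.inr (w, 1) → w ∈ S := by
    intro x hx w hw
    obtain ⟨y, hy, hxy⟩ := hsucc x hx
    rw [hw] at hxy
    simpa [S, ← eq_of_gSell_eq_a hxy.symm] using hy
  refine hasCycleIn_of_forall_exists_adj (S := S) ?_ ?_ ?_
  · obtain ⟨x, hx⟩ := List.exists_mem_of_ne_nil l hl
    rcases x with ⟨v, i⟩ | ⟨⟨⟨u, w⟩, ha⟩, _ | _⟩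
    · obtain ⟨-, rfl | rfl⟩ := hQ _ hx
      · exact ⟨v, mem_S_of_buy _ hx v rfl⟩
      · exact ⟨v, by simpa [S] using hx⟩
    · exact ⟨w, mem_S_of_buy _ hx w rfl⟩
    · exact absurd (hQ _ hx).1 (by simp)
  · intro v hv
    exact (hQ (Sum.inl (v, 3)) (by simpa [S] using hv)).1
  · intro v hv
    obtain ⟨y, hy, hvy⟩ := hsucc _ (by simpa [S] using hv)
    rcases gSell_eq_a'_cases hvy.symm with rfl | ⟨w, ha, rfl⟩
    · exact absurd (hQ _ hy) (by simp [ARouteIn])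
    · exact ⟨w, mem_S_of_buy _ hy w rfl, ha⟩

theorem hasCycleIn_of_bRouteIn {l : List (GContract V adj)} (hl : l ≠ [])
    (hR : ∀ x ∈ l, BRouteIn R x) (hsucc : ∀ x ∈ l, ∃ y ∈ l, gBuy adj x = gSell adj y) :
    HasCycleIn adj R := by
  classical
  set S := univ.filter fun v => (Sum.inl (v, 4) : GContract V adj) ∈ l
  have mem_S_of_buy : ∀ x ∈ l, ∀ w, gBuy adj x = Sum.inr (w, 3) → w ∈ S := by
    intro x hx w hw
    obtain ⟨y, hy, hxy⟩ := hsucc x hx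
    rw [hw] at hxy
    simpa [S, ← eq_of_gSell_eq_b hxy.symm] using hy
  -- `b'_v t_v` would have to be followed by `t_v t`, which is not on the b-route
  have hnot : ∀ v, (Sum.inl (v, 6) : GContract V adj) ∉ l := by
    intro v hv
    obtain ⟨y, hy, hvy⟩ := hsucc _ hv
    rw [eq_of_gSell_eq_t hvy.symm] at hy
    exact absurd (hR _ hy) (by simp [BRouteIn])
  refine hasCycleIn_of_forall_exists_adj (S := S) ?_ ?_ ?_
  · obtain ⟨x, hx⟩ := List.exists_mem_of_ne_nil l hl
    rcases x with ⟨v, i⟩ | ⟨⟨⟨u, w⟩, ha⟩, _ | _⟩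
    · obtain ⟨-, rfl | rfl⟩ := hR _ hx
      · exact ⟨v, by simpa [S] using hx⟩
      · exact absurd hx (hnot v)
    · exact absurd (hR _ hx).1 (by simp)
    · exact ⟨w, mem_S_of_buy _ hx w rfl⟩
  · intro v hv
    exact (hR (Sum.inl (v, 4)) (by simpa [S] using hv)).1
  · intro v hv
    obtain ⟨y, hy, hvy⟩ := hsucc _ (by simpa [S] using hv)
    rcases gSell_eq_b'_cases hvy.symm with rfl | ⟨w, ha, rfl⟩
    · exact absurd hy (hnot v)
    · exact ⟨w, mem_S_of_buy _ hy w rfl, ha⟩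

theorem ARouteIn.sell_ne_buy_of_mem_gOutcome (hx : ARouteIn Q x) (hy : y ∈ gOutcome adj Q) :
    gSell adj y ≠ gBuy adj x := by
  rcases x with ⟨v, i⟩ | ⟨⟨⟨u, w⟩, ha⟩, _ | _⟩ <;>
    rcases y with ⟨v', j⟩ | ⟨⟨⟨u', w'⟩, ha'⟩, _ | _⟩
  all_goals try fin_cases i
  all_goals try fin_cases j
  all_goals simp_all [ARouteIn, gOutcome, gOutcomeMem, gBuy, gSell]
  all_goals grind

theorem BRouteIn.buy_ne_sell_of_mem_gOutcome (hx : BRouteIn Qᶜ x) (hy : y ∈ gOutcome adj Q) :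
    gBuy adj y ≠ gSell adj x := by
  rcases x with ⟨v, i⟩ | ⟨⟨⟨u, w⟩, ha⟩, _ | _⟩ <;>
    rcases y with ⟨v', j⟩ | ⟨⟨⟨u', w'⟩, ha'⟩, _ | _⟩
  all_goals try fin_cases i
  all_goals try fin_cases j
  all_goals simp_all [BRouteIn, gOutcome, gOutcomeMem, gBuy, gSell]
  all_goals grind

variable {C : GFirm V → Finset (GContract V adj) → Finset (GContract V adj)}
  {rkB rkS : GFirm V → GContract V adj → ℕ}

theorem gadgetNet_not_terminal (p : V × Fin 6) : ¬ (gadgetNet adj C).Terminal (Sum.inr p) := by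
  obtain ⟨v, i⟩ := p
  fin_cases i
  · exact not_terminal_of_buy_of_sell (x := Sum.inl (v, 0)) (y := Sum.inl (v, 1)) rfl rfl
  · exact not_terminal_of_buy_of_sell (x := Sum.inl (v, 1)) (y := Sum.inl (v, 3)) rfl rfl
  · exact not_terminal_of_buy_of_sell (x := Sum.inl (v, 3)) (y := Sum.inl (v, 5)) rfl rfl
  · exact not_terminal_of_buy_of_sell (x := Sum.inl (v, 2)) (y := Sum.inl (v, 4)) rfl rfl
  · exact not_terminal_of_buy_of_sell (x := Sum.inl (v, 4)) (y := Sum.inl (v, 6)) rfl rfl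
  · exact not_terminal_of_buy_of_sell (x := Sum.inl (v, 5)) (y := Sum.inl (v, 7)) rfl rfl

theorem ARouteIn.not_terminal_buy (hx : ARouteIn Q x) :
    ¬ (gadgetNet adj C).Terminal (gBuy adj x) := by
  rcases x with ⟨v, i⟩ | ⟨⟨⟨u, w⟩, ha⟩, _ | _⟩
  · obtain ⟨-, rfl | rfl⟩ := hx <;> exact gadgetNet_not_terminal _
  all_goals exact gadgetNet_not_terminal _

theorem BRouteIn.not_terminal_sell (hx : BRouteIn R x) :
    ¬ (gadgetNet adj C).Terminal (gSell adj x) := by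
  rcases x with ⟨v, i⟩ | ⟨⟨⟨u, w⟩, ha⟩, _ | _⟩
  · obtain ⟨-, rfl | rfl⟩ := hx <;> exact gadgetNet_not_terminal _
  all_goals exact gadgetNet_not_terminal _

theorem not_isPath_of_aRouteIn (hFB : (gadgetNet adj C).FlowBased rkB rkS)
    {l : List (GContract V adj)} (hacc : ∀ f, (gadgetNet adj C).Involved l.toFinset f →
      (gadgetNet adj C).AccAlongside (gOutcome adj Q) l.toFinset f)
    (hA : ∀ x ∈ l, ARouteIn Q x) : ¬ (gadgetNet adj C).IsPath l := by
  intro hpath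
  have hl : l ≠ [] := hpath.fst
  have hlast := hA _ (List.getLast_mem hl)
  obtain ⟨y, hy, hsy⟩ := hFB.exists_sell_eq hlast.not_terminal_buy hacc
    (List.mem_toFinset.mpr (List.getLast_mem hl)) rfl
  rcases mem_union.mp hy with hyA | hyl
  · exact hlast.sell_ne_buy_of_mem_gOutcome hyA hsy
  · exact hpath.sell_ne_buy_getLast hl (List.mem_toFinset.mp hyl) hsy

theorem not_isPath_of_bRouteIn (hFB : (gadgetNet adj C).FlowBased rkB rkS)
    {l : List (GContract V adj)} (hacc : ∀ f, (gadgetNet adj C).Involved l.toFinset f →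
      (gadgetNet adj C).AccAlongside (gOutcome adj Q) l.toFinset f)
    (hB : ∀ x ∈ l, BRouteIn Qᶜ x) : ¬ (gadgetNet adj C).IsPath l := by
  intro hpath
  have hl : l ≠ [] := hpath.fst
  have hhead := hB _ (List.head_mem hl)
  obtain ⟨y, hy, hby⟩ := hFB.exists_buy_eq hhead.not_terminal_sell hacc
    (List.mem_toFinset.mpr (List.head_mem hl)) rfl
  rcases mem_union.mp hy with hyA | hyl
  · exact hhead.buy_ne_sell_of_mem_gOutcome hyA hby
  · exact hpath.buy_ne_sell_head hl (List.mem_toFinset.mp hyl) hby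

theorem GadgetPrefs.rkB_lt (hpref : GadgetPrefs adj C rkB rkS) {f : GFirm V}
    (hx : gBuy adj x = f) (hy : gBuy adj y = f) (hxl : x.isLeft) (hyr : y.isRight) :
    rkB f x < rkB f y :=
  hpref.nonZ_first_B f x (mem_filter.mpr ⟨mem_univ _, hx⟩) y
    (mem_filter.mpr ⟨mem_univ _, hy⟩) hxl hyr

theorem GadgetPrefs.rkS_lt (hpref : GadgetPrefs adj C rkB rkS) {f : GFirm V}
    (hx : gSell adj x = f) (hy : gSell adj y = f) (hxl : x.isLeft) (hyr : y.isRight) :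
    rkS f x < rkS f y :=
  hpref.nonZ_first_S f x (mem_filter.mpr ⟨mem_univ _, hx⟩) y
    (mem_filter.mpr ⟨mem_univ _, hy⟩) hxl hyr

theorem aRouteIn_or_bRouteIn (hFB : (gadgetNet adj C).FlowBased rkB rkS)
    (hpref : GadgetPrefs adj C rkB rkS) {B : Finset (GContract V adj)}
    (hdisj : Disjoint B (gOutcome adj Q))
    (hacc : ∀ f, (gadgetNet adj C).Involved B f →
      (gadgetNet adj C).AccAlongside (gOutcome adj Q) B f)
    (hx : x ∈ B) : ARouteIn Q x ∨ BRouteIn Qᶜ x := by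
  have hxA : x ∉ gOutcome adj Q := disjoint_left.mp hdisj hx
  -- Remaining: `s_v b_v` (`v ∉ Q`), rejected by `s_v` for `s_v a_v`; `a'_v t_v` (`v ∈ Q`),
  -- by `t_v` for `b'_v t_v`; and arcs leaving or entering the wrong set, by `a'_u` for
  -- `a'_u t_u`, `a_w` for `s_w a_w`, `b'_u` for `b'_u t_u` or `b_w` for `s_w b_w`.
  rcases x with ⟨v, i⟩ | ⟨⟨⟨u, w⟩, ha⟩, _ | _⟩
  · fin_cases i <;> by_cases hv : v ∈ Q <;>
      simp [ARouteIn, BRouteIn, gOutcome, gOutcomeMem, hv] at hxA ⊢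
    · exact (hFB.rkS_le_of_card_XB_le_one (gadgetNet_not_terminal _)
        (card_XB_le_one fun _ => eq_of_gBuy_eq_s) hacc hx rfl (y := Sum.inl (v, 1))
        (by simp [gOutcome, gOutcomeMem, hv]) rfl).not_gt (hpref.sv_pref v)
    · exact (hFB.rkB_le_of_card_XS_le_one (gadgetNet_not_terminal _)
        (card_XS_le_one fun _ => eq_of_gSell_eq_t) hacc hx rfl (y := Sum.inl (v, 6))
        (by simp [gOutcome, gOutcomeMem, hv]) rfl).not_gt (hpref.tv_pref v)
  · refine .inl ⟨rfl, by_contra fun hu => ?_, by_contra fun hw => ?_⟩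
    · exact (hFB.rkS_le_of_card_XB_le_one (gadgetNet_not_terminal _)
        (card_XB_le_one fun _ => eq_of_gBuy_eq_a') hacc hx rfl (y := Sum.inl (u, 5))
        (by simp [gOutcome, gOutcomeMem, hu]) rfl).not_gt (hpref.rkS_lt rfl rfl rfl rfl)
    · exact (hFB.rkB_le_of_card_XS_le_one (gadgetNet_not_terminal _)
        (card_XS_le_one fun _ => eq_of_gSell_eq_a) hacc hx rfl (y := Sum.inl (w, 1))
        (by simp [gOutcome, gOutcomeMem, hw]) rfl).not_gt (hpref.rkB_lt rfl rfl rfl rfl)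
  · refine .inr ⟨rfl, mem_compl.mpr fun hu => ?_, mem_compl.mpr fun hw => ?_⟩
    · exact (hFB.rkS_le_of_card_XB_le_one (gadgetNet_not_terminal _)
        (card_XB_le_one fun _ => eq_of_gBuy_eq_b') hacc hx rfl (y := Sum.inl (u, 6))
        (by simp [gOutcome, gOutcomeMem, hu]) rfl).not_gt (hpref.rkS_lt rfl rfl rfl rfl)
    · exact (hFB.rkB_le_of_card_XS_le_one (gadgetNet_not_terminal _)
        (card_XS_le_one fun _ => eq_of_gSell_eq_b) hacc hx rfl (y := Sum.inl (w, 2))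
        (by simp [gOutcome, gOutcomeMem, hw]) rfl).not_gt (hpref.rkB_lt rfl rfl rfl rfl)

end Gadget

/-- If the vertices of the digraph can be partitioned into two acyclic
sets `Q` and `Qᶜ`, then the outcome `A(Q)` of the gadget network admits no blocking path
and no blocking cycle. -/
theorem gadget_outcome_unblocked {V : Type} [DecidableEq V] [Fintype V]
    (adj : V → V → Bool)
    (C : GFirm V → Finset (GContract V adj) → Finset (GContract V adj))
    (rkB rkS : GFirm V → GContract V adj → ℕ)
    (hN : (gadgetNet adj C).IsFlowNetwork rkB rkS)
    (hpref : GadgetPrefs adj C rkB rkS)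
    (Q : Finset V) (hQ : ¬ HasCycleIn adj Q) (hR : ¬ HasCycleIn adj Qᶜ) :
    ¬ ∃ l, (gadgetNet adj C).BlockingPathOrCycle (gOutcome adj Q) l := by
  rintro ⟨l, hpc, hdisj, hacc⟩
  obtain ⟨-, hFB, -⟩ := hN
  have hl : l ≠ [] := hpc.elim Exists.fst Exists.fst
  have hchain : l.IsChain fun x y => gBuy adj x = gSell adj y :=
    hpc.elim (fun ⟨_, h, _⟩ => h) (fun ⟨_, h, _⟩ => h)
  have hsucc (hc : (gadgetNet adj C).IsCycle l) :
      ∀ x ∈ l, ∃ y ∈ l, gBuy adj x = gSell adj y := fun _ hx => hc.exists_sell_eq_buy hx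
  rcases hchain.forall_or_forall
    (fun x hx => aRouteIn_or_bRouteIn hFB hpref hdisj hacc (List.mem_toFinset.mpr hx))
    (fun x y hxy hx hy => hx.buy_ne_sell hy hxy) (fun x y hxy hx hy => hx.buy_ne_sell hy hxy)
    with hA | hB
  · rcases hpc with hpath | hcycle
    · exact not_isPath_of_aRouteIn hFB hacc hA hpath
    · exact hQ (hasCycleIn_of_aRouteIn hl hA (hsucc hcycle))
  · rcases hpc with hpath | hcycle
    · exact not_isPath_of_bRouteIn hFB hacc hB hpath
    · exact hR (hasCycleIn_of_bRouteIn hl hB (hsucc hcycle))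
end

section
/- The choice function C_Π^g — which accepts the upstream contract y whenever offered, and as a seller: with y offered and downstream offers X, accepts all of X if Σ{a_i : x_i ∈ X} ≤ s, and otherwise accepts X ∩ {x_1,...,x_t} for the unique t with Σ{a_i : x_i ∈ X, i ≤ t} ≤ s < Σ{a_i : x_i ∈ X, i ≤ t+1}; and rejects all downstream contracts when y is not offered — satisfies IRC and is fully substitutable. -/
open Finset

/-! ### The two-firm network built from a Partition-style instance -/

/-- Contracts of the two-firm network: `none` is the contract `y` (sold by firm `f` to
firm `g`), and `some i` is the contract `x_i` (sold by `g` to `f`). -/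
abbrev PContract (k : ℕ) : Type := Option (Fin k)

/-- The two-firm trading network: firm `f` is `false`, firm `g` is `true`; their choice
functions are `Cf'` and `Cg'` respectively. -/
def pnet {k : ℕ} (Cf' Cg' : Finset (PContract k) → Finset (PContract k)) :
    TradingNetwork Bool (PContract k) :=
  ⟨fun x => x.isSome, fun x => !x.isSome, fun g W => if g then Cg' W else Cf' W⟩

/-- The total `∑ i, a i  (= 2s)`. -/
def ptotal {k : ℕ} (a : Fin k → ℕ) : ℕ := ∑ i, a i

/-- The sum of the `a i` over the contracts `x_i` present in `W`. -/
def psum {k : ℕ} (a : Fin k → ℕ) (W : Finset (PContract k)) : ℕ :=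
  ∑ i ∈ Finset.univ.filter (fun i => some i ∈ W), a i

/-- The choice function `C_Π^f`: accept all offered upstream contracts `x_i`, and accept
the downstream contract `y` iff the offered `x_i` satisfy `∑ a_i ≥ s`. -/
def CPartF {k : ℕ} (a : Fin k → ℕ) (W : Finset (PContract k)) : Finset (PContract k) :=
  if ptotal a ≤ 2 * psum a W then W else W.erase none

/-- The choice function `C_Π^g`: if `y` is not offered, reject everything; if `y` is
offered, accept `y` together with those offered `x_i` whose prefix sum `∑ {a_j : x_j`
offered, `j ≤ i}` is at most `s`. -/
def CPartG {k : ℕ} (a : Fin k → ℕ) (W : Finset (PContract k)) : Finset (PContract k) :=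
  if none ∈ W then
    insert none (W.filter fun x => ∃ i : Fin k, x = some i ∧
      2 * (∑ j ∈ Finset.univ.filter (fun j => some j ∈ W ∧ j ≤ i), a j) ≤ ptotal a)
  else ∅

/-!
Firm `g` always accepts `y` when it is offered, so it never rejects an upstream contract. A
downstream `x_i` is rejected exactly when `y` is missing or the prefix sum of the offered
`a_j`, `j ≤ i`, exceeds `s`; this only gets likelier with more downstream and fewer upstream
offers, which is full substitutability. For IRC, suppose dropping rejected contracts makes
`x_i` acceptable. The first rejected offer `x_m` comes before `x_i`, and everything before
`x_m` was accepted, hence is still offered; so the new prefix sum at `x_i` is at least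
`a_i + ∑_{j < m} a_j ≥ a_m + ∑_{j < m} a_j > s`, using `a_m ≤ a_i`.
-/

section PrefixAcceptance

variable {ι : Type*} [LinearOrder ι] (a : ι → ℕ)

def prefixSum (S : Finset ι) (i : ι) : ℕ := ∑ j ∈ S with j ≤ i, a j

def prefixAccepted (c : ℕ) (S : Finset ι) : Finset ι := {i ∈ S | prefixSum a S i ≤ c}

lemma prefixSum_mono {S' S : Finset ι} (h : S' ⊆ S) (i : ι) :
    prefixSum a S' i ≤ prefixSum a S i :=
  sum_le_sum_of_subset (filter_subset_filter _ h)

lemma prefixSum_eq_add_sum_lt {S : Finset ι} {m : ι} (hm : m ∈ S) :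
    prefixSum a S m = a m + ∑ j ∈ S with j < m, a j := by
  have hsplit : ({j ∈ S | j ≤ m} : Finset ι) = insert m {j ∈ S | j < m} := by
    ext j
    simp only [mem_filter, mem_insert, le_iff_lt_or_eq]
    aesop
  rw [prefixSum, hsplit, sum_insert (by simp)]

lemma prefixSum_le_of_prefixAccepted_subset (ha : Monotone a) {c : ℕ} {S' S : Finset ι}
    (hacc : prefixAccepted a c S ⊆ S') (hS' : S' ⊆ S) {i : ι} (hi : i ∈ S')
    (h : prefixSum a S' i ≤ c) : prefixSum a S i ≤ c := by
  by_contra! hgt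
  set T : Finset ι := {j ∈ S | c < prefixSum a S j}
  have hT : T.Nonempty := ⟨i, mem_filter.2 ⟨hS' hi, hgt⟩⟩
  set m := T.min' hT
  obtain ⟨hmS, hmgt⟩ : m ∈ S ∧ c < prefixSum a S m := mem_filter.1 (T.min'_mem hT)
  have hmi : m ≤ i := T.min'_le i (mem_filter.2 ⟨hS' hi, hgt⟩)
  have hbefore : ∀ j ∈ S, j < m → j ∈ S' := fun j hjS hjm =>
    hacc (mem_filter.2 ⟨hjS,
      not_lt.1 fun hj => (T.min'_le j (mem_filter.2 ⟨hjS, hj⟩)).not_gt hjm⟩)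
  have hlow : ∑ j ∈ S with j < m, a j ≤ ∑ j ∈ S' with j < m, a j :=
    sum_le_sum_of_subset fun j hj =>
      let ⟨hjS, hjm⟩ := mem_filter.1 hj
      mem_filter.2 ⟨hbefore j hjS hjm, hjm⟩
  have hhigh : a i + ∑ j ∈ S' with j < m, a j ≤ prefixSum a S' i := by
    rw [← sum_insert (by simp [hmi.not_gt])]
    refine sum_le_sum_of_subset (insert_subset (mem_filter.2 ⟨hi, le_rfl⟩) fun j hj => ?_)
    obtain ⟨hjS', hjm⟩ := mem_filter.1 hj
    exact mem_filter.2 ⟨hjS', hjm.le.trans hmi⟩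
  rw [prefixSum_eq_add_sum_lt a hmS] at hmgt
  have := ha hmi
  omega

theorem prefixAccepted_eq_of_prefixAccepted_subset (ha : Monotone a) {c : ℕ} {S' S : Finset ι}
    (hacc : prefixAccepted a c S ⊆ S') (hS' : S' ⊆ S) :
    prefixAccepted a c S' = prefixAccepted a c S := by
  ext i
  simp only [prefixAccepted, mem_filter]
  constructor
  · rintro ⟨hi, h⟩
    exact ⟨hS' hi, prefixSum_le_of_prefixAccepted_subset a ha hacc hS' hi h⟩
  · rintro ⟨hi, h⟩
    exact ⟨hacc (mem_filter.2 ⟨hi, h⟩), (prefixSum_mono a hS' i).trans h⟩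

end PrefixAcceptance

section PartitionNetwork

variable {k : ℕ} (a : Fin k → ℕ)

lemma none_mem_CPartG_iff {W : Finset (PContract k)} : none ∈ CPartG a W ↔ none ∈ W := by
  unfold CPartG
  split_ifs with hW <;> simp [hW]

/-- `ptotal a / 2` is `s`; the floor is harmless, as `2 * p ≤ t ↔ p ≤ t / 2` in `ℕ`. -/
lemma some_mem_CPartG_iff {W : Finset (PContract k)} {i : Fin k} :
    some i ∈ CPartG a W ↔ none ∈ W ∧ i ∈ prefixAccepted a (ptotal a / 2) (eraseNone W) := by
  have hsum : ∑ j ∈ univ.filter (fun j => some j ∈ W ∧ j ≤ i), a j =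
      prefixSum a (eraseNone W) i := by
    simp only [prefixSum]
    congr 1
    ext j
    simp [mem_eraseNone]
  unfold CPartG
  split_ifs with hW
  · simp [prefixAccepted, hsum, hW, mem_eraseNone, Nat.le_div_iff_mul_le, mul_comm]
  · simp [hW]

theorem CPartG_irc (ha : Monotone a) {Y Z : Finset (PContract k)} (hCZ : CPartG a Y ⊆ Z)
    (hZY : Z ⊆ Y) : CPartG a Z = CPartG a Y := by
  by_cases hY : none ∈ Y
  · have hZ : none ∈ Z := hCZ ((none_mem_CPartG_iff a).2 hY)
    have hacc : prefixAccepted a (ptotal a / 2) (eraseNone Y) ⊆ eraseNone Z := fun i hi =>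
      mem_eraseNone.2 (hCZ ((some_mem_CPartG_iff a).2 ⟨hY, hi⟩))
    ext (_ | i)
    · simp only [none_mem_CPartG_iff, hY, hZ]
    · simp only [some_mem_CPartG_iff, hY, hZ, true_and,
        prefixAccepted_eq_of_prefixAccepted_subset a ha hacc (eraseNone.monotone hZY)]
  · have hZ : none ∉ Z := fun h => hY (hZY h)
    simp [CPartG, hY, hZ]

variable (Cf : Finset (PContract k) → Finset (PContract k))

lemma none_mem_pnet_offer_iff {Y Z : Finset (PContract k)} :
    none ∈ (Y ∩ (pnet Cf (CPartG a)).XB true) ∪ (Z ∩ (pnet Cf (CPartG a)).XS true) ↔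
      none ∈ Y := by
  simp [TradingNetwork.XB, TradingNetwork.XS, pnet]

lemma eraseNone_pnet_offer {Y Z : Finset (PContract k)} :
    eraseNone ((Y ∩ (pnet Cf (CPartG a)).XB true) ∪ (Z ∩ (pnet Cf (CPartG a)).XS true)) =
      eraseNone Z := by
  ext i
  simp [mem_eraseNone, TradingNetwork.XB, TradingNetwork.XS, pnet]

lemma pnet_RB_eq_empty (Y Z : Finset (PContract k)) :
    (pnet Cf (CPartG a)).RB true Y Z = ∅ := by
  ext (_ | i)
  · simp [TradingNetwork.RB, TradingNetwork.CB, TradingNetwork.XB, TradingNetwork.XS, pnet,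
      none_mem_CPartG_iff]
  · simp [TradingNetwork.RB, TradingNetwork.XB, pnet]

lemma none_notMem_pnet_RS (Y Z : Finset (PContract k)) :
    none ∉ (pnet Cf (CPartG a)).RS true Z Y := by
  simp [TradingNetwork.RS, TradingNetwork.XS, pnet]

lemma some_mem_pnet_RS_iff {Y Z : Finset (PContract k)} {i : Fin k} :
    some i ∈ (pnet Cf (CPartG a)).RS true Z Y ↔
      some i ∈ Z ∧ (none ∈ Y → ptotal a / 2 < prefixSum a (eraseNone Z) i) := by
  have hCS : (pnet Cf (CPartG a)).C true = CPartG a := rfl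
  simp only [TradingNetwork.RS, TradingNetwork.CS, mem_sdiff, mem_inter, hCS,
    some_mem_CPartG_iff, none_mem_pnet_offer_iff, eraseNone_pnet_offer, prefixAccepted,
    mem_filter, mem_eraseNone]
  simp +contextual [TradingNetwork.XS, pnet]

theorem pnet_CPartG_fullySubstitutableAt :
    (pnet Cf (CPartG a)).FullySubstitutableAt true := by
  intro Y' Y Z' Z hY hZ
  refine ⟨by simp [pnet_RB_eq_empty], ?_, by simp [pnet_RB_eq_empty], ?_⟩
  · rintro (_ | i) hi
    · exact absurd hi (none_notMem_pnet_RS a Cf Y Z')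
    rw [some_mem_pnet_RS_iff] at hi ⊢
    exact ⟨hZ hi.1, fun hy =>
      (hi.2 hy).trans_le (prefixSum_mono a (eraseNone.monotone hZ) i)⟩
  · rintro (_ | i) hi
    · exact absurd hi (none_notMem_pnet_RS a Cf Y Z)
    rw [some_mem_pnet_RS_iff] at hi ⊢
    exact ⟨hi.1, fun hy => hi.2 (hY hy)⟩

end PartitionNetwork

theorem CPartG_IRC_and_fullySubstitutable_general {k : ℕ} (a : Fin k → ℕ)
    (hmono : ∀ i j : Fin k, i ≤ j → a i ≤ a j) :
    (pnet (CPartF a) (CPartG a)).IRCAt true ∧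
    (pnet (CPartF a) (CPartG a)).FullySubstitutableAt true :=
  ⟨fun _ _ => CPartG_irc a fun i j => hmono i j,
    pnet_CPartG_fullySubstitutableAt a (CPartF a)⟩

/-- The choice function `C_Π^g` built from a Partition instance
`a_1 ≤ … ≤ a_k` of positive integers satisfies the irrelevance of rejected contracts
condition and is fully substitutable. -/
theorem CPartG_IRC_and_fullySubstitutable {k : ℕ} (a : Fin k → ℕ)
    (hpos : ∀ i, 0 < a i) (hmono : ∀ i j : Fin k, i ≤ j → a i ≤ a j) :
    (pnet (CPartF a) (CPartG a)).IRCAt true ∧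
    (pnet (CPartF a) (CPartG a)).FullySubstitutableAt true :=
  CPartG_IRC_and_fullySubstitutable_general a hmono
end

section
/- In the two-firm network with contracts y and x_1,...,x_{2n}, choice function C^g as defined, and f's choice function known to be either C_0^f or C_I^f for some unknown n-element subset I of {1,...,2n}, deciding whether the empty outcome is stable requires, in the worst case, at least binomial(2n, n) oracle calls to f's choice function. -/
open Finset

/-! ### The oracle network -/

/-- The choice function `C_0^f` on contracts `y, x_1, …, x_{2n}`: accept all upstream
contracts `x_i`, and accept `y` iff at least `n+1` contracts `x_i` are offered. -/
def C0f (n : ℕ) (W : Finset (PContract (2 * n))) : Finset (PContract (2 * n)) :=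
  if n + 1 ≤ (W.erase none).card then W else W.erase none

/-- The choice function `C_I^f` for an `n`-element set `I`: accept all upstream contracts,
and accept `y` iff at least `n+1` contracts `x_i` are offered or the offered upstream set
is exactly `X_I`. -/
def CIf (n : ℕ) (I : Finset (Fin (2 * n))) (W : Finset (PContract (2 * n))) :
    Finset (PContract (2 * n)) :=
  if n + 1 ≤ (W.erase none).card ∨ W.erase none = I.image some then W else W.erase none

/-- The choice function `C^g` of the oracle network (the choice function `C_Π^g` of the
Partition instance `(1,1,…,1)` of length `2n`). -/
def CgOracle (n : ℕ) : Finset (PContract (2 * n)) → Finset (PContract (2 * n)) :=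
  CPartG fun _ => 1

/-! With `C_0^f`, a blocking set `Z` of the empty outcome must contain `y` (otherwise `g` rejects
everything) and hence at least `n + 1` contracts `x_i` (otherwise `f` rejects `y`); but then `g`
rejects the offered `x_i` of largest index, whose prefix count exceeds `n`. So `∅` is stable.
With `C_I^f`, the set `X_I ∪ {y}` (here `insertNone I`, with `y = none`) blocks `∅`.
Since `C_I^f` and `C_0^f` differ only on the offer `X_I ∪ {y}`, which determines `I`, fewer
than `(2n choose n)` queries leave some `I` undetected. -/

section pnet

open TradingNetwork

variable {k : ℕ} (Cf Cg : Finset (PContract k) → Finset (PContract k))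

theorem pnet_own (b : Bool) (Y : Finset (PContract k)) : (pnet Cf Cg).own b Y = Y :=
  filter_true_of_mem fun x _ => by cases x <;> cases b <;> simp [pnet]

theorem pnet_acceptable_empty_iff :
    (pnet Cf Cg).Acceptable ∅ ↔ Cf ∅ = ∅ ∧ Cg ∅ = ∅ := by
  simp only [Acceptable, pnet_own, Bool.forall_bool]
  exact Iff.rfl

theorem pnet_blocks_empty_iff (Z : Finset (PContract k)) :
    (pnet Cf Cg).Blocks ∅ Z ↔ Z.Nonempty ∧ Z ⊆ Cf Z ∧ Z ⊆ Cg Z := by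
  simp only [Blocks, Involved, AccAlongside, pnet_own, disjoint_empty_right, empty_union,
    true_and, Bool.forall_bool]
  simp only [pnet, Bool.false_eq_true, if_false, if_true]
  tauto

end pnet

theorem Finset.exists_card_eq_insertNone_notMem {α : Type*} [Fintype α]
    {Q : Finset (Finset (Option α))} {n : ℕ} (hQ : #Q < (Fintype.card α).choose n) :
    ∃ I : Finset α, #I = n ∧ insertNone I ∉ Q := by
  have hcard : #((powersetCard n (univ : Finset α)).map insertNone.toEmbedding) =
      (Fintype.card α).choose n := by
    simp
  obtain ⟨W, hW, hWQ⟩ := exists_mem_notMem_of_card_lt_card (hcard ▸ hQ)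
  obtain ⟨I, hI, rfl⟩ := mem_map.1 hW
  exact ⟨I, (mem_powersetCard.1 hI).2, hWQ⟩

theorem Finset.insertNone_eq_insert_image {α : Type*} [DecidableEq α] (I : Finset α) :
    insertNone I = insert none (I.image some) := by
  ext (_ | a) <;> simp

section oracle

variable {n : ℕ} {I : Finset (Fin (2 * n))} {W : Finset (PContract (2 * n))}

theorem CIf_eq_C0f_of_ne (h : W ≠ insertNone I) : CIf n I W = C0f n W := by
  unfold CIf C0f
  by_cases hW : W.erase none = I.image some
  · by_cases hn : none ∈ W
    · exact absurd (by rw [← insert_erase hn, hW, insertNone_eq_insert_image]) h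
    · simp [erase_eq_of_notMem hn]
  · simp only [hW, or_false]

theorem CIf_insertNone : CIf n I (insertNone I) = insertNone I := by
  simp [CIf, insertNone_eq_insert_image]

theorem C0f_empty : C0f n ∅ = ∅ := by
  simp [C0f]

theorem le_card_erase_none_of_subset_C0f (hW : W ⊆ C0f n W) (hn : none ∈ W) :
    n + 1 ≤ #(W.erase none) := by
  by_contra h
  simp only [C0f, if_neg h] at hW
  exact notMem_erase none W (hW hn)

theorem CgOracle_of_none_notMem (hW : none ∉ W) : CgOracle n W = ∅ := by
  simp [CgOracle, CPartG, hW]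

theorem none_mem_CgOracle (hW : none ∈ W) : none ∈ CgOracle n W := by
  simp [CgOracle, CPartG, hW]

theorem some_mem_CgOracle_iff (hW : none ∈ W) (i : Fin (2 * n)) :
    some i ∈ CgOracle n W ↔ some i ∈ W ∧ #{j ∈ W.eraseNone | j ≤ i} ≤ n := by
  have hfilter : ({j | some j ∈ W ∧ j ≤ i} : Finset (Fin (2 * n))) =
      {j ∈ W.eraseNone | j ≤ i} := by
    ext; simp
  simp [CgOracle, CPartG, hW, ptotal, hfilter]

theorem subset_CgOracle_iff (hW : W.Nonempty) :
    W ⊆ CgOracle n W ↔ none ∈ W ∧ #(W.erase none) ≤ n := by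
  rw [← card_eraseNone_eq_card_erase]
  constructor
  · intro hsub
    have hn : none ∈ W := by
      by_contra h
      obtain ⟨w, hw⟩ := hW
      simpa [CgOracle_of_none_notMem h] using hsub hw
    refine ⟨hn, ?_⟩
    by_contra! hlt
    have hne : W.eraseNone.Nonempty := card_pos.1 (by omega)
    set i := W.eraseNone.max' hne
    have hall : {j ∈ W.eraseNone | j ≤ i} = W.eraseNone :=
      filter_true_of_mem fun j hj => le_max' _ j hj
    have hi := ((some_mem_CgOracle_iff hn i).1 (hsub (mem_eraseNone.1 (max'_mem _ hne)))).2
    rw [hall] at hi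
    omega
  · rintro ⟨hn, hcard⟩ (_ | i) hi
    · exact none_mem_CgOracle hn
    · exact (some_mem_CgOracle_iff hn i).2 ⟨hi, (card_filter_le _ _).trans hcard⟩

theorem pnet_C0f_stable_empty : (pnet (C0f n) (CgOracle n)).Stable ∅ := by
  refine ⟨(pnet_acceptable_empty_iff _ _).2
    ⟨C0f_empty, CgOracle_of_none_notMem (notMem_empty _)⟩, ?_⟩
  rintro ⟨Z, hZ⟩
  obtain ⟨hne, hf, hg⟩ := (pnet_blocks_empty_iff _ _ Z).1 hZ
  obtain ⟨hn, hcard⟩ := (subset_CgOracle_iff hne).1 hg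
  have := le_card_erase_none_of_subset_C0f hf hn
  omega

theorem pnet_CIf_not_stable_empty (hI : #I = n) :
    ¬ (pnet (CIf n I) (CgOracle n)).Stable ∅ := by
  rintro ⟨-, hno⟩
  refine hno ⟨insertNone I, (pnet_blocks_empty_iff _ _ _).2
    ⟨insertNone_nonempty, CIf_insertNone.ge,
      (subset_CgOracle_iff insertNone_nonempty).2 ⟨none_mem_insertNone, ?_⟩⟩⟩
  rw [← card_eraseNone_eq_card_erase, eraseNone_insertNone, hI]

end oracle

/-- Deciding stability of the empty outcome in the oracle network, where
`f`'s choice function is accessible only through queries and is promised to be `C_0^f` or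
`C_I^f` for some unknown `n`-element `I`, requires `(2n choose n)` oracle calls: any set of
fewer than `(2n choose n)` queried offer sets leaves some `I` whose answers agree with
`C_0^f` on every query, although the empty outcome is stable for `C_0^f` and unstable
for `C_I^f`. -/
theorem oracle_lower_bound (n : ℕ) (queries : Finset (Finset (PContract (2 * n))))
    (hq : queries.card < Nat.choose (2 * n) n) :
    ∃ I : Finset (Fin (2 * n)), I.card = n ∧
      (∀ W ∈ queries, CIf n I W = C0f n W) ∧
      ¬ (pnet (CIf n I) (CgOracle n)).Stable ∅ ∧
      (pnet (C0f n) (CgOracle n)).Stable ∅ := by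
  obtain ⟨I, hI, hIq⟩ := exists_card_eq_insertNone_notMem (Q := queries) (by simpa using hq)
  exact ⟨I, hI, fun W hW => CIf_eq_C0f_of_ne (ne_of_mem_of_not_mem hW hIq),
    pnet_CIf_not_stable_empty hI, pnet_C0f_stable_empty⟩
end
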